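/- arXiv:1411.4161 — 7 statements merged into one kernel-verified Lean document; each statement's English description precedes it below -/
import Mathlib

section
/- For every non-decreasing sequence x : ℕ → ℕ (indexed from 1) and every n ≥ 1, the number of x-parking functions of length n satisfies the recursion PF(x; n) = Σ_{k=1}^{n} C(n, k) · x(1)^k · PF(x_k; n − k), where x_k is the shift of x by k and C(n, k) is the binomial coefficient. -/
/-!
Split an `x`-parking function `f` of length `n` according to the set `S` of indices with
`f i ≤ x 1`; the condition at `k = 1` says `S` is nonempty. On `S` the values are arbitrary in
`[1, x 1]`, giving the factor `x 1 ^ #S`. As `x` is non-decreasing, `S` is counted in every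
condition, and since every value off `S` exceeds `x 1`, the condition at `#S + m` says exactly
that `f - x 1`, restricted to the complement of `S`, meets the condition at `m` for the shifted
sequence `shift x #S`. Grouping the sets `S` by size gives the binomial coefficients.
-/

def IsPF (x : ℕ → ℕ) {n : ℕ} (f : Fin n → ℕ) : Prop :=
  (∀ i, 1 ≤ f i) ∧
  ∀ k, 1 ≤ k → k ≤ n → k ≤ (Finset.univ.filter (fun i => f i ≤ x k)).card

noncomputable def PF (x : ℕ → ℕ) (n : ℕ) : ℕ :=
  Nat.card {f : Fin n → ℕ // IsPF x f}

def shift (x : ℕ → ℕ) (s : ℕ) : ℕ → ℕ := fun m => x (s + m) - x 1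

open Finset

section IsPFOn

variable {ι κ : Type*} [Fintype ι] [Fintype κ] {x : ℕ → ℕ}

/-- The parking condition over an arbitrary finite index type, so that it can be applied to the
restriction of a function to the complement of a set. -/
def IsPFOn (x : ℕ → ℕ) (f : ι → ℕ) : Prop :=
  (∀ i, 1 ≤ f i) ∧ ∀ k, 1 ≤ k → k ≤ Fintype.card ι → k ≤ #{i | f i ≤ x k}

lemma isPF_iff_isPFOn {n : ℕ} {f : Fin n → ℕ} : IsPF x f ↔ IsPFOn x f := by
  simp only [IsPF, IsPFOn, Fintype.card_fin]

lemma isPFOn_comp_equiv_iff {f : ι → ℕ} (e : κ ≃ ι) : IsPFOn x (f ∘ e) ↔ IsPFOn x f := by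
  have hcount : ∀ t, #{j | f (e j) ≤ t} = #{i | f i ≤ t} := fun t => card_equiv e (by simp)
  simp only [IsPFOn, Function.comp_apply, hcount, Fintype.card_congr e, e.forall_congr_left,
    Equiv.apply_symm_apply]

lemma IsPFOn.apply_le {f : ι → ℕ} (hf : IsPFOn x f) (i : ι) : f i ≤ x (Fintype.card ι) := by
  have hall : #{j | f j ≤ x (Fintype.card ι)} = #(univ : Finset ι) :=
    le_antisymm (card_filter_le _ _) (hf.2 _ (Fintype.card_pos_iff.2 ⟨i⟩) le_rfl)
  exact card_filter_eq_iff.1 hall i (mem_univ i)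

instance (x : ℕ → ℕ) : Finite {f : ι → ℕ // IsPFOn x f} :=
  Finite.of_injective (fun f i => (⟨f.1 i, Nat.lt_succ_of_le (f.2.apply_le i)⟩ : Fin _))
    fun _ _ h => Subtype.ext (funext fun i => congrArg Fin.val (congrFun h i))

lemma card_isPFOn (x : ℕ → ℕ) : Nat.card {f : ι → ℕ // IsPFOn x f} = PF x (Fintype.card ι) :=
  Nat.card_congr <| (Fintype.equivFin ι).arrowCongr (Equiv.refl ℕ) |>.subtypeEquiv fun f => by
    rw [isPF_iff_isPFOn]; exact (isPFOn_comp_equiv_iff _).symm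

def lowSet (x : ℕ → ℕ) (f : ι → ℕ) : Finset ι := {i | f i ≤ x 1}

lemma lowSet_eq_iff {f : ι → ℕ} {S : Finset ι} : lowSet x f = S ↔ ∀ i, i ∈ S ↔ f i ≤ x 1 := by
  simp only [lowSet, Finset.ext_iff, mem_filter, mem_univ, true_and, Iff.comm]

lemma IsPFOn.one_le_card_lowSet [Nonempty ι] {f : ι → ℕ} (hf : IsPFOn x f) :
    1 ≤ #(lowSet x f) :=
  hf.2 1 le_rfl Fintype.card_pos

end IsPFOn

section Glue

variable {ι : Type*} [DecidableEq ι] {S : Finset ι} {c : ℕ} {a : S → Fin c}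
  {g : {i // i ∉ S} → ℕ}

def glue (S : Finset ι) (c : ℕ) (a : S → Fin c) (g : {i // i ∉ S} → ℕ) (i : ι) : ℕ :=
  if h : i ∈ S then a ⟨i, h⟩ + 1 else g ⟨i, h⟩ + c

lemma glue_sub (i : {i // i ∉ S}) : glue S c a g i - c = g i := by
  simp [glue, i.2]

lemma mem_iff_glue_le (hg : ∀ i, 1 ≤ g i) (i : ι) : i ∈ S ↔ glue S c a g i ≤ c := by
  unfold glue
  split_ifs with h
  · simp [h, (a ⟨i, h⟩).2]
  · have := hg ⟨i, h⟩
    simp only [h, false_iff]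
    omega

lemma one_le_glue (hg : ∀ i, 1 ≤ g i) (i : ι) : 1 ≤ glue S c a g i := by
  unfold glue
  split_ifs with h
  · omega
  · have := hg ⟨i, h⟩
    omega

end Glue

section Decomposition

variable {ι : Type*} [Fintype ι] [DecidableEq ι] {x : ℕ → ℕ}

lemma card_filter_le_eq_card_add {f : ι → ℕ} {S : Finset ι} {c t : ℕ}
    (hS : ∀ i, i ∈ S ↔ f i ≤ c) (hct : c ≤ t) :
    #{i | f i ≤ t} = #S + #{i : {i // i ∉ S} | f i - c ≤ t - c} := by
  have hlow : ({i | f i ≤ t ∧ i ∈ S} : Finset ι) = S := by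
    ext i
    simp only [mem_filter, mem_univ, true_and, and_iff_right_iff_imp]
    exact fun hi => ((hS i).1 hi).trans hct
  have hhigh : #{i : {i // i ∉ S} | f i - c ≤ t - c} = #{i | f i ≤ t ∧ i ∉ S} := by
    rw [← Fintype.card_subtype, ← Fintype.card_subtype]
    refine Fintype.card_congr ((Equiv.subtypeSubtypeEquivSubtypeInter (· ∉ S)
      (fun i => f i - c ≤ t - c)).trans (Equiv.subtypeEquivRight fun i => ?_))
    rw [and_comm (a := f i ≤ t)]
    exact and_congr_right fun hi => by have := (hS i).not.1 hi; omega
  rw [hhigh, ← card_filter_add_card_filter_not (· ∈ S), filter_filter, filter_filter, hlow]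

lemma card_subtype_not_mem (S : Finset ι) :
    Fintype.card {i // i ∉ S} = Fintype.card ι - #S := by
  rw [Fintype.card_subtype_compl, Fintype.card_coe]

lemma isPFOn_iff_isPFOn_shift {f : ι → ℕ} {S : Finset ι} (hx : ∀ j, 1 ≤ j → x 1 ≤ x j)
    (hS : ∀ i, i ∈ S ↔ f i ≤ x 1) (hS₁ : 1 ≤ #S) (hf : ∀ i, 1 ≤ f i) :
    IsPFOn x f ↔ IsPFOn (shift x #S) (fun i : {i // i ∉ S} => f i - x 1) := by
  have hcard := card_subtype_not_mem S
  have hSle : #S ≤ Fintype.card ι := card_le_univ S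
  have hpos (i : {i // i ∉ S}) : 1 ≤ f i - x 1 := by
    have := (hS i).not.1 i.2
    omega
  constructor
  · rintro ⟨-, hcount⟩
    refine ⟨hpos, fun m hm hmle => ?_⟩
    have := hcount (#S + m) (by omega) (by omega)
    rw [card_filter_le_eq_card_add hS (hx _ (by omega))] at this
    exact Nat.le_of_add_le_add_left this
  · rintro ⟨-, hcount⟩
    refine ⟨hf, fun k hk hkle => ?_⟩
    rw [card_filter_le_eq_card_add hS (hx k hk)]
    rcases le_or_gt k #S with h | h
    · omega
    · have := hcount (k - #S) (by omega) (by omega)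
      simp only [shift, Nat.add_sub_cancel' h.le] at this
      omega

def lowSetFiberEquiv (hx : ∀ j, 1 ≤ j → x 1 ≤ x j) (S : Finset ι) (hS₁ : 1 ≤ #S) :
    {f : ι → ℕ // IsPFOn x f ∧ lowSet x f = S} ≃
      (S → Fin (x 1)) × {g : {i // i ∉ S} → ℕ // IsPFOn (shift x #S) g} where
  toFun f :=
    have hS := lowSet_eq_iff.1 f.2.2
    (fun i => ⟨f.1 i - 1, by have := (hS i).1 i.2; have := f.2.1.1 i; omega⟩,
      ⟨fun i => f.1 i - x 1, (isPFOn_iff_isPFOn_shift hx hS hS₁ f.2.1.1).1 f.2.1⟩)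
  invFun p :=
    have hS := mem_iff_glue_le (a := p.1) p.2.2.1
    ⟨glue S (x 1) p.1 p.2.1,
      (isPFOn_iff_isPFOn_shift hx hS hS₁ (one_le_glue p.2.2.1)).2 (by simpa [glue_sub] using p.2.2),
      lowSet_eq_iff.2 hS⟩
  left_inv f := by
    have hS := lowSet_eq_iff.1 f.2.2
    ext i
    simp only [glue]
    split_ifs with h
    · have := f.2.1.1 i; omega
    · have := (hS i).not.1 h; omega
  right_inv p :=
    Prod.ext (funext fun i => Fin.ext (by simp [glue])) (Subtype.ext (funext glue_sub))

end Decomposition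

section Recursion

variable {ι : Type*} [Fintype ι] [DecidableEq ι] [Nonempty ι] {x : ℕ → ℕ}

lemma card_lowSet_fiber (hx : ∀ j, 1 ≤ j → x 1 ≤ x j) (S : Finset ι) :
    Nat.card {f : ι → ℕ // IsPFOn x f ∧ lowSet x f = S} =
      if 1 ≤ #S then x 1 ^ #S * PF (shift x #S) (Fintype.card ι - #S) else 0 := by
  split_ifs with hS₁
  · rw [Nat.card_congr (lowSetFiberEquiv hx S hS₁), Nat.card_prod, Nat.card_fun, card_isPFOn,
      card_subtype_not_mem]
    simp
  · rw [Nat.card_eq_zero]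
    exact Or.inl ⟨fun f => hS₁ (f.2.2 ▸ f.2.1.one_le_card_lowSet)⟩

theorem card_isPFOn_eq_sum (hx : ∀ j, 1 ≤ j → x 1 ≤ x j) :
    Nat.card {f : ι → ℕ // IsPFOn x f} = ∑ k ∈ Icc 1 (Fintype.card ι),
      (Fintype.card ι).choose k * x 1 ^ k * PF (shift x k) (Fintype.card ι - k) := by
  set N := Fintype.card ι
  calc Nat.card {f : ι → ℕ // IsPFOn x f}
      = ∑ S : Finset ι, Nat.card {p : {f : ι → ℕ // IsPFOn x f} // lowSet x p.1 = S} := by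
        rw [← Nat.card_sigma, Nat.card_congr (Equiv.sigmaFiberEquiv _)]
    _ = ∑ S : Finset ι, if 1 ≤ #S then x 1 ^ #S * PF (shift x #S) (N - #S) else 0 :=
        sum_congr rfl fun S _ => by
          rw [Nat.card_congr (Equiv.subtypeSubtypeEquivSubtypeInter (IsPFOn x) (lowSet x · = S)),
            card_lowSet_fiber hx]
    _ = ∑ k ∈ range (N + 1),
          N.choose k * if 1 ≤ k then x 1 ^ k * PF (shift x k) (N - k) else 0 := by
        rw [← powerset_univ, sum_powerset_apply_card
          (fun k => if 1 ≤ k then x 1 ^ k * PF (shift x k) (N - k) else 0), card_univ]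
        rfl
    _ = _ := by
        simp_rw [mul_ite, mul_zero, ← sum_filter, mul_assoc]
        congr 1
        ext k
        simp only [mem_filter, mem_range, mem_Icc]
        omega

end Recursion

lemma apply_one_le_apply {x : ℕ → ℕ} (hx : ∀ m, 1 ≤ m → x m ≤ x (m + 1)) :
    ∀ j, 1 ≤ j → x 1 ≤ x j :=
  fun j hj => Nat.le_induction le_rfl (fun m hm ih => ih.trans (hx m hm)) j hj

theorem pf_recursion (x : ℕ → ℕ) (hx : ∀ m, 1 ≤ m → x m ≤ x (m + 1))
    (n : ℕ) (hn : 1 ≤ n) :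
    PF x n = ∑ k ∈ Finset.Icc 1 n, n.choose k * (x 1) ^ k * PF (shift x k) (n - k) := by
  have : Nonempty (Fin n) := ⟨⟨0, hn⟩⟩
  simpa only [card_isPFOn, Fintype.card_fin] using
    card_isPFOn_eq_sum (ι := Fin n) (apply_one_le_apply hx)
end

section
/- For every non-decreasing sequence x : ℕ → ℕ (indexed from 1) and every n ≥ 1, the number of non-decreasing x-parking functions of length n satisfies the recursion T(x; n) = Σ_{k=1}^{n} C(k + x(1) − 1, k) · T(x_k; n − k), where x_k is the shift of x by k and C(k + x(1) − 1, k) counts the multisets of size k on x(1) elements. -/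
/-- The number of non-decreasing `x`-parking functions of length `n`. -/
noncomputable def T (x : ℕ → ℕ) (n : ℕ) : ℕ :=
  Nat.card {f : Fin n → ℕ // IsPF x f ∧ Monotone f}

/-!
A non-decreasing parking function is determined by its multiset of values. Split such a multiset
`s` at `x 1`: if `k` values are at most `x 1` (so `1 ≤ k` by the condition at `1`), they form an
arbitrary multiset of size `k` on `{1, …, x 1}`, and subtracting `x 1` from the other `n - k`
values gives an `x_k`-parking multiset, because `x 1 ≤ x (k + j)` makes the condition of `s` at
`k + j` the condition of the remainder at `j`. Gluing is inverse to splitting.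
-/

open Finset

theorem Monotone.ofFn_injective {α : Type*} [LinearOrder α] {n : ℕ} {f g : Fin n → α}
    (hf : Monotone f) (hg : Monotone g)
    (h : (List.ofFn f : Multiset α) = List.ofFn g) : f = g :=
  List.ofFn_injective <|
    (Multiset.coe_eq_coe.mp h).eq_of_sortedLE hf.sortedLE_ofFn hg.sortedLE_ofFn

theorem Multiset.exists_monotone_ofFn_eq {α : Type*} [LinearOrder α] {n : ℕ} (s : Multiset α)
    (hs : Multiset.card s = n) :
    ∃ f : Fin n → α, Monotone f ∧ (List.ofFn f : Multiset α) = s := by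
  subst hs
  rw [← Multiset.length_sort (s := s) (r := (· ≤ ·))]
  exact ⟨(s.sort).get, (Multiset.pairwise_sort s _).sortedLE.monotone_get,
    by rw [List.ofFn_get, Multiset.sort_eq]⟩

theorem card_filter_univ_eq_countP_ofFn {α : Type*} {n : ℕ} (f : Fin n → α) (p : α → Prop)
    [DecidablePred p] : #{i | p (f i)} = (List.ofFn f : Multiset α).countP p := by
  rw [← Fin.univ_val_map, Multiset.countP_map, Finset.card_def, Finset.filter_val]

theorem Finset.natCard_supported_multisets {α : Type*} (S : Finset α) (k : ℕ) :
    Nat.card {u : Multiset α // Multiset.card u = k ∧ ∀ a ∈ u, a ∈ S} = (#S + k - 1).choose k := by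
  classical
  have hbij : Function.Bijective fun m : Sym S k =>
      (⟨(m : Multiset S).map (↑), by simp, fun _ ha => by
        obtain ⟨b, -, rfl⟩ := Multiset.mem_map.1 ha
        exact b.2⟩ : {u : Multiset α // Multiset.card u = k ∧ ∀ a ∈ u, a ∈ S}) := by
    refine ⟨fun m m' h => Sym.coe_injective (Multiset.map_injective Subtype.val_injective
      (congrArg Subtype.val h)), fun u => ?_⟩
    refine ⟨⟨u.1.attach.map fun a => ⟨a.1, u.2.2 a.1 a.2⟩, by simp [u.2.1]⟩, Subtype.ext ?_⟩
    simp
  rw [← Nat.card_eq_of_bijective _ hbij, Nat.card_eq_fintype_card, Sym.card_sym_eq_choose,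
    Fintype.card_coe]

def IsPFMultiset (x : ℕ → ℕ) (n : ℕ) (s : Multiset ℕ) : Prop :=
  Multiset.card s = n ∧ (∀ a ∈ s, 1 ≤ a) ∧ ∀ k, 1 ≤ k → k ≤ n → k ≤ s.countP (· ≤ x k)

theorem isPF_iff_isPFMultiset_ofFn {x : ℕ → ℕ} {n : ℕ} {f : Fin n → ℕ} :
    IsPF x f ↔ IsPFMultiset x n (List.ofFn f) := by
  simp only [IsPF, IsPFMultiset, Multiset.coe_card, List.length_ofFn, Multiset.mem_coe,
    List.forall_mem_ofFn_iff, true_and]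
  refine and_congr_right' (forall_congr' fun k => ?_)
  rw [card_filter_univ_eq_countP_ofFn f (· ≤ x k)]

theorem T_eq_natCard_isPFMultiset (x : ℕ → ℕ) (n : ℕ) :
    T x n = Nat.card {s // IsPFMultiset x n s} := by
  refine Nat.card_eq_of_bijective (fun f => ⟨List.ofFn f.1, isPF_iff_isPFMultiset_ofFn.1 f.2.1⟩)
    ⟨fun f g h => Subtype.ext (f.2.2.ofFn_injective g.2.2 (congrArg Subtype.val h)), fun s => ?_⟩
  obtain ⟨s, hs⟩ := s
  obtain ⟨f, hf, rfl⟩ := s.exists_monotone_ofFn_eq hs.1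
  exact ⟨⟨f, isPF_iff_isPFMultiset_ofFn.2 hs, hf⟩, rfl⟩

theorem IsPFMultiset.le_of_mem {x : ℕ → ℕ} {n : ℕ} {s : Multiset ℕ} (hs : IsPFMultiset x n s)
    {a : ℕ} (ha : a ∈ s) : a ≤ x n := by
  have hn : 1 ≤ n := hs.1 ▸ Multiset.card_pos_iff_exists_mem.2 ⟨a, ha⟩
  have hall : s.countP (· ≤ x n) = Multiset.card s :=
    le_antisymm (Multiset.countP_le_card _ _) (hs.1 ▸ hs.2.2 n hn le_rfl)
  exact Multiset.countP_eq_card.1 hall a ha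

theorem finite_isPFMultiset (x : ℕ → ℕ) (n : ℕ) : Finite {s // IsPFMultiset x n s} :=
  Finite.of_injective (β := (range (x n + 1)).sym n)
    (fun s => ⟨⟨s.1, s.2.1⟩, mem_sym_iff.2 fun _ ha =>
      mem_range_succ_iff.2 (s.2.le_of_mem ha)⟩)
    fun _ _ h => Subtype.ext (congrArg (fun m : (range (x n + 1)).sym n => (m.1 : Multiset ℕ)) h)

theorem Nat.card_subtype_eq_sum_card_fiberwise {α β : Type*} [DecidableEq β] {p : α → Prop}
    [Finite {a // p a}] (g : α → β) (s : Finset β) (hg : ∀ a, p a → g a ∈ s) :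
    Nat.card {a // p a} = ∑ b ∈ s, Nat.card {a // p a ∧ g a = b} := by
  have := Fintype.ofFinite {a // p a}
  rw [Nat.card_eq_fintype_card, ← Finset.card_univ,
    card_eq_sum_card_fiberwise (f := fun a => g a.1) fun a _ => hg a.1 a.2]
  refine sum_congr rfl fun b _ => ?_
  rw [← Nat.card_congr (Equiv.subtypeSubtypeEquivSubtypeInter p (g · = b)),
    Nat.card_eq_fintype_card, Fintype.card_subtype]

namespace Multiset

theorem countP_le_add_map_add {u t : Multiset ℕ} {c d : ℕ} (hu : ∀ a ∈ u, a ≤ c) (hcd : c ≤ d) :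
    (u + t.map (· + c)).countP (· ≤ d) = card u + t.countP (· ≤ d - c) := by
  rw [countP_add, countP_eq_card.2 fun a ha => (hu a ha).trans hcd, countP_map,
    countP_eq_card_filter]
  congr 2
  exact filter_congr fun a _ => by omega

theorem filter_le_add_map_add {u t : Multiset ℕ} {c : ℕ} (hu : ∀ a ∈ u, a ≤ c)
    (ht : ∀ a ∈ t, 1 ≤ a) : (u + t.map (· + c)).filter (· ≤ c) = u := by
  rw [filter_add, filter_eq_self.2 hu, filter_eq_nil.2, add_zero]
  simp only [mem_map]
  rintro _ ⟨a, ha, rfl⟩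
  have := ht a ha
  omega

theorem map_sub_filter_lt_add_map_add {u t : Multiset ℕ} {c : ℕ} (hu : ∀ a ∈ u, a ≤ c)
    (ht : ∀ a ∈ t, 1 ≤ a) : ((u + t.map (· + c)).filter (c < ·)).map (· - c) = t := by
  rw [filter_add, filter_eq_nil.2 fun a ha => not_lt.2 (hu a ha), zero_add, filter_eq_self.2,
    map_map]
  · exact (map_congr rfl fun a _ => Nat.add_sub_cancel a c).trans (map_id t)
  · simp only [mem_map]
    rintro _ ⟨a, ha, rfl⟩
    have := ht a ha
    omega

theorem filter_le_add_map_add_map_sub_filter_lt (s : Multiset ℕ) (c : ℕ) :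
    s.filter (· ≤ c) + ((s.filter (c < ·)).map (· - c)).map (· + c) = s := by
  rw [map_map]
  conv_rhs => rw [← filter_add_not (· ≤ c) s]
  simp only [not_le]
  congr 1
  refine (map_congr rfl fun a ha => ?_).trans (map_id _)
  have := (mem_filter.1 ha).2
  simp only [Function.comp_apply, id]
  omega

end Multiset

section Fiber

variable {x : ℕ → ℕ} {n k : ℕ}

theorem isPFMultiset_add_map_add (hx1 : ∀ m, 1 ≤ m → x 1 ≤ x m) (hkn : k ≤ n)
    {u t : Multiset ℕ} (hu : Multiset.card u = k ∧ ∀ a ∈ u, a ∈ Icc 1 (x 1))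
    (ht : IsPFMultiset (shift x k) (n - k) t) : IsPFMultiset x n (u + t.map (· + x 1)) := by
  obtain ⟨ht_card, ht_pos, ht_park⟩ := ht
  have hu_le : ∀ a ∈ u, a ≤ x 1 := fun a ha => (mem_Icc.1 (hu.2 a ha)).2
  refine ⟨?_, ?_, fun j hj hjn => ?_⟩
  · rw [Multiset.card_add, Multiset.card_map, hu.1, ht_card]
    omega
  · simp only [Multiset.mem_add, Multiset.mem_map]
    rintro _ (ha | ⟨a, ha, rfl⟩)
    · exact (mem_Icc.1 (hu.2 _ ha)).1
    · exact le_add_right (ht_pos a ha)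
  · rw [Multiset.countP_le_add_map_add hu_le (hx1 j hj), hu.1]
    rcases le_or_gt j k with hjk | hkj
    · omega
    · have h := ht_park (j - k) (by omega) (by omega)
      rw [shift, Nat.add_sub_cancel' hkj.le] at h
      omega

theorem IsPFMultiset.map_sub_filter_lt (hx1 : ∀ m, 1 ≤ m → x 1 ≤ x m) {s : Multiset ℕ}
    (hs : IsPFMultiset x n s) (hk : s.countP (· ≤ x 1) = k) :
    IsPFMultiset (shift x k) (n - k) ((s.filter (x 1 < ·)).map (· - x 1)) := by
  have hs_eq := s.filter_le_add_map_add_map_sub_filter_lt (x 1)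
  have hu_card : Multiset.card (s.filter (· ≤ x 1)) = k := by
    rw [← Multiset.countP_eq_card_filter, hk]
  have hu_le : ∀ a ∈ s.filter (· ≤ x 1), a ≤ x 1 := fun a ha => (Multiset.mem_filter.1 ha).2
  refine ⟨?_, ?_, fun j hj hjn => ?_⟩
  · have h := congrArg Multiset.card hs_eq
    rw [Multiset.card_add, Multiset.card_map, hu_card, hs.1] at h
    omega
  · simp only [Multiset.mem_map, Multiset.mem_filter]
    rintro _ ⟨a, ⟨-, ha⟩, rfl⟩
    omega
  · have h := hs.2.2 (k + j) (by omega) (by omega)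
    rw [← hs_eq, Multiset.countP_le_add_map_add hu_le (hx1 _ (by omega)), hu_card] at h
    rw [shift]
    omega

def pfFiberEquiv (hx1 : ∀ m, 1 ≤ m → x 1 ≤ x m) (hkn : k ≤ n) :
    {s // IsPFMultiset x n s ∧ s.countP (· ≤ x 1) = k} ≃
      {u : Multiset ℕ // Multiset.card u = k ∧ ∀ a ∈ u, a ∈ Icc 1 (x 1)} ×
        {t // IsPFMultiset (shift x k) (n - k) t} where
  toFun s :=
    (⟨s.1.filter (· ≤ x 1), by rw [← Multiset.countP_eq_card_filter, s.2.2], fun a ha =>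
      mem_Icc.2 ⟨s.2.1.2.1 a (Multiset.mem_of_mem_filter ha), (Multiset.mem_filter.1 ha).2⟩⟩,
     ⟨_, s.2.1.map_sub_filter_lt hx1 s.2.2⟩)
  invFun p :=
    ⟨p.1.1 + p.2.1.map (· + x 1), isPFMultiset_add_map_add hx1 hkn p.1.2 p.2.2, by
      rw [Multiset.countP_le_add_map_add (fun a ha => (mem_Icc.1 (p.1.2.2 a ha)).2) le_rfl,
        Nat.sub_self, Multiset.countP_eq_zero.2 fun a ha => by have := p.2.2.2.1 a ha; omega,
        p.1.2.1, add_zero]⟩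
  left_inv s := Subtype.ext (s.1.filter_le_add_map_add_map_sub_filter_lt (x 1))
  right_inv p := by
    have hu_le : ∀ a ∈ p.1.1, a ≤ x 1 := fun a ha => (mem_Icc.1 (p.1.2.2 a ha)).2
    exact Prod.ext (Subtype.ext (Multiset.filter_le_add_map_add hu_le p.2.2.2.1))
      (Subtype.ext (Multiset.map_sub_filter_lt_add_map_add hu_le p.2.2.2.1))

end Fiber

theorem pf_types_recursion (x : ℕ → ℕ) (hx : ∀ m, 1 ≤ m → x m ≤ x (m + 1))
    (n : ℕ) (hn : 1 ≤ n) :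
    T x n = ∑ k ∈ Finset.Icc 1 n, (k + x 1 - 1).choose k * T (shift x k) (n - k) := by
  have hx1 : ∀ m, 1 ≤ m → x 1 ≤ x m := fun m hm =>
    monotoneOn_nat_Ici_of_le_succ hx (Set.mem_Ici.2 le_rfl) (Set.mem_Ici.2 hm) hm
  have := finite_isPFMultiset x n
  rw [T_eq_natCard_isPFMultiset, Nat.card_subtype_eq_sum_card_fiberwise (·.countP (· ≤ x 1))
    (Icc 1 n) fun s hs => mem_Icc.2 ⟨hs.2.2 1 le_rfl hn, hs.1 ▸ Multiset.countP_le_card _ _⟩]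
  refine sum_congr rfl fun k hk => ?_
  rw [Nat.card_congr (pfFiberEquiv hx1 (mem_Icc.1 hk).2), Nat.card_prod,
    natCard_supported_multisets, Nat.card_Icc, T_eq_natCard_isPFMultiset, Nat.add_sub_cancel,
    add_comm (x 1)]
end

section
/- For every non-decreasing sequence x : ℕ → ℕ (indexed from 1) and every n ≥ 1, the number of x-parking functions of length n is given by the closed formula PF(x; n) = Σ_{π composition of n} (n! / (π_1! ⋯ π_{ℓ(π)}!)) · ∏_{i=1}^{ℓ(π)} Υ(x; π, i)^{π_i}. -/
/-- `Υ(x; π, i)` (with `i` 0-indexed): `Υ(x; π, 1) = x(1)` and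
`Υ(x; π, i) = x(1 + π(i-1)) - x(1 + π(i-2))` for `2 ≤ i` (1-indexed). -/
def Upsilon (x : ℕ → ℕ) {n : ℕ} (c : Composition n) (i : Fin c.length) : ℕ :=
  if i.val = 0 then x 1
  else x (1 + c.sizeUpTo i.val) - x (1 + c.sizeUpTo (i.val - 1))

open Finset

-- The coefficient of `∏ k, X k ^ b k` in `(∑ k, X k) ^ |α|` counts the maps with fibre sizes `b`
-- and is given by the multinomial theorem.
open MvPolynomial in
theorem card_fun_fiber_eq_multinomial {α ι : Type*} [Fintype α] [DecidableEq α] [Fintype ι]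
    [DecidableEq ι] (b : ι → ℕ) (hb : ∑ k, b k = Fintype.card α) :
    #{g : α → ι | ∀ k, #{a | g a = k} = b k} = Nat.multinomial univ b := by
  let d : ι →₀ ℕ := Finsupp.equivFunOnFinite.symm b
  let e : (α → ι) → ι →₀ ℕ := fun g => ∑ a, Finsupp.single (g a) 1
  have he : ∀ g, e g = d ↔ ∀ k, #{a | g a = k} = b k := by
    intro g
    simp only [e, d, Finsupp.ext_iff, Finsupp.finsetSum_apply, Finsupp.single_apply,
      Finset.sum_boole]
    simp
  have hexpand : (∑ k, X k : MvPolynomial ι ℕ) ^ Fintype.card α =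
      ∑ g : α → ι, monomial (e g) 1 := by
    rw [← Finset.card_univ, ← Finset.prod_const, Finset.prod_univ_sum]
    exact sum_congr rfl fun g _ => by simp only [e, monomial_sum_one, X]
  have hd : (d.sum fun _ m => m) = Fintype.card α := by
    rw [← hb, Finsupp.sum_fintype _ _ fun _ => rfl]
    rfl
  have := coeff_sum_X_pow_of_fintype (R := ℕ) d (Fintype.card α)
  rw [hexpand, coeff_sum, if_pos hd, ← Finsupp.multinomial_of_support_subset (subset_univ _)]
    at this
  simp only [coeff_monomial, he, Finset.sum_boole, Nat.cast_id] at this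
  exact this

theorem exists_lt_and_le_succ {α : Type*} [LinearOrder α] {A : ℕ → α} {v : α} {L : ℕ}
    (h0 : A 0 < v) (hL : v ≤ A L) : ∃ k < L, A k < v ∧ v ≤ A (k + 1) := by
  induction L with
  | zero => exact absurd (h0.trans_le hL) (lt_irrefl _)
  | succ L ih =>
    by_cases h : A L < v
    · exact ⟨L, L.lt_succ_self, h, hL⟩
    · obtain ⟨k, hk, hkv⟩ := ih (not_lt.1 h)
      exact ⟨k, hk.trans L.lt_succ_self, hkv⟩

theorem Monotone.le_succ_iff_of_lt_of_le {α : Type*} [LinearOrder α] {A : ℕ → α}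
    (hA : Monotone A) {v : α} {i : ℕ} (h₁ : A i < v) (h₂ : v ≤ A (i + 1)) (k : ℕ) :
    v ≤ A (k + 1) ↔ i ≤ k := by
  refine ⟨fun hv => ?_, fun hik => h₂.trans (hA (Nat.succ_le_succ hik))⟩
  by_contra! hki
  exact (h₁.trans_le hv).not_ge (hA hki)

theorem Monotone.eq_of_lt_of_le_succ {α : Type*} [LinearOrder α] {A : ℕ → α}
    (hA : Monotone A) {v : α} {i i' : ℕ} (h₁ : A i < v) (h₂ : v ≤ A (i + 1))
    (h₁' : A i' < v) (h₂' : v ≤ A (i' + 1)) : i = i' :=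
  le_antisymm ((hA.le_succ_iff_of_lt_of_le h₁ h₂ i').1 h₂')
    ((hA.le_succ_iff_of_lt_of_le h₁' h₂' i).1 h₂)

namespace Composition

variable {n : ℕ}

theorem ext_sizeUpTo {c c' : Composition n}
    (h : ∀ k ≤ min c.length c'.length, c.sizeUpTo k = c'.sizeUpTo k) : c = c' := by
  wlog hle : c.length ≤ c'.length generalizing c c'
  · exact (this (fun k hk => (h k (min_comm c.length _ ▸ hk)).symm) (by omega)).symm
  have hlen : c.length = c'.length := by
    by_contra hne
    have hlt : c.length < c'.length := by omega
    have := h c.length (by omega)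
    have := (c'.sizeUpTo_strict_mono hlt).trans_le (c'.sizeUpTo_le _)
    rw [c.sizeUpTo_length] at *
    omega
  refine Composition.ext (List.ext_getElem hlen fun i hi hi' => ?_)
  have := c.sizeUpTo_succ hi
  have := c'.sizeUpTo_succ hi'
  have := h i (by simp only [length] at *; omega)
  have := h (i + 1) (by simp only [length] at *; omega)
  omega

theorem exists_sizeUpTo_eq {L : ℕ} (s : ℕ → ℕ) (h0 : s 0 = 0) (hL : s L = n)
    (hs : ∀ t < L, s t < s (t + 1)) :
    ∃ c : Composition n, c.length = L ∧ ∀ k ≤ L, c.sizeUpTo k = s k := by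
  have htel : ∀ k ≤ L, ∑ t ∈ range k, (s (t + 1) - s t) = s k := by
    intro k
    induction k with
    | zero => simp [h0]
    | succ k ih =>
      intro hk
      have := hs k hk
      rw [sum_range_succ, ih (by omega)]
      omega
  let c : Composition n :=
    ⟨List.ofFn fun t : Fin L => s (t + 1) - s t,
      fun {i} hi => by
        obtain ⟨t, rfl⟩ := List.mem_ofFn.1 hi
        have := hs t t.2
        omega,
      by
        rw [List.sum_ofFn, Fin.sum_univ_eq_sum_range (fun t => s (t + 1) - s t), htel L le_rfl,
          hL]⟩
  have hc : c.length = L := List.length_ofFn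
  refine ⟨c, hc, fun k => ?_⟩
  induction k with
  | zero => simp [h0]
  | succ k ih =>
    intro hk
    have := hs k hk
    rw [c.sizeUpTo_succ (hc ▸ hk), ih (by omega)]
    simp only [c, List.getElem_ofFn]
    omega

theorem card_fiber_eq_blocksFun_iff {α : Type*} [Fintype α] (c : Composition n)
    (g : α → Fin c.length) :
    (∀ k, #{a | g a = k} = c.blocksFun k) ↔
      ∀ k ≤ c.length, #{a | (g a : ℕ) < k} = c.sizeUpTo k := by
  classical
  have hsplit : ∀ k : Fin c.length,
      #{a | (g a : ℕ) < k + 1} = #{a | (g a : ℕ) < k} + #{a | g a = k} := by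
    intro k
    rw [← card_union_of_disjoint (disjoint_filter.2 fun a _ h h' => by omega), ← filter_or]
    congr 1
    ext a
    simp only [mem_filter, mem_univ, true_and, Fin.ext_iff]
    omega
  constructor
  · intro hg k
    induction k with
    | zero => simp
    | succ k ih =>
      intro hk
      rw [hsplit ⟨k, hk⟩, ih (by omega), hg, c.sizeUpTo_succ' ⟨k, hk⟩]
  · intro h k
    have := hsplit k
    rw [h _ k.2, h _ k.2.le, c.sizeUpTo_succ' k] at this
    omega

end Composition

variable {x : ℕ → ℕ} {n : ℕ}

/-- Block `i` of `c` owns the values in `(cutPoint x c i, cutPoint x c (i + 1)]`. -/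
def cutPoint (x : ℕ → ℕ) (c : Composition n) : ℕ → ℕ
  | 0 => 0
  | k + 1 => x (1 + c.sizeUpTo k)

def nextBoundary (x : ℕ → ℕ) (f : Fin n → ℕ) (s : ℕ) : ℕ := #{j | f j ≤ x (1 + s)}

def IsCompatible (x : ℕ → ℕ) (c : Composition n) (f : Fin n → ℕ) : Prop :=
  (∀ j, 1 ≤ f j) ∧ ∀ k < c.length, nextBoundary x f (c.sizeUpTo k) = c.sizeUpTo (k + 1)

theorem upsilon_eq_cutPoint_sub (c : Composition n) (i : Fin c.length) :
    Upsilon x c i = cutPoint x c (i + 1) - cutPoint x c i := by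
  obtain ⟨_ | i, hi⟩ := i <;> simp [Upsilon, cutPoint]

theorem monotone_cutPoint (hx : MonotoneOn x (Set.Ici 1)) (c : Composition n) :
    Monotone (cutPoint x c) := by
  refine monotone_nat_of_le_succ fun k => ?_
  cases k with
  | zero => exact Nat.zero_le _
  | succ k =>
    exact hx (by simp) (by simp) (by simpa using c.monotone_sizeUpTo k.le_succ)

theorem monotone_nextBoundary (hx : MonotoneOn x (Set.Ici 1)) (f : Fin n → ℕ) :
    Monotone (nextBoundary x f) := fun s t hst =>
  card_le_card fun j => by
    simp only [mem_filter, mem_univ, true_and]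
    exact fun hj => hj.trans (hx (by simp) (by simp) (by omega))

theorem nextBoundary_le (f : Fin n → ℕ) (s : ℕ) : nextBoundary x f s ≤ n :=
  (card_filter_le _ _).trans_eq (card_fin n)

theorem IsPF.lt_nextBoundary {f : Fin n → ℕ} (hf : IsPF x f) {s : ℕ} (hs : s < n) :
    s < nextBoundary x f s := by
  have := hf.2 (1 + s) (by omega) (by omega)
  unfold nextBoundary
  omega

theorem IsPF.exists_isCompatible (hx : MonotoneOn x (Set.Ici 1)) {f : Fin n → ℕ}
    (hf : IsPF x f) : ∃ c, IsCompatible x c f := by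
  set s : ℕ → ℕ := fun t => (nextBoundary x f)^[t] 0
  have hs_succ : ∀ t, s (t + 1) = nextBoundary x f (s t) := fun t =>
    Function.iterate_succ_apply' _ _ _
  have hs_mono : Monotone s :=
    (monotone_nextBoundary hx f).monotone_iterate_of_le_map (Nat.zero_le _)
  have hs_le : ∀ t, s t ≤ n := by
    rintro (_ | t)
    · exact Nat.zero_le _
    · exact (hs_succ t).trans_le (nextBoundary_le f _)
  have hs_lt : ∀ t, s t < n → s t < s (t + 1) := fun t ht =>
    (hs_succ t).symm ▸ hf.lt_nextBoundary ht
  have hs_ge : ∀ t, min t n ≤ s t := by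
    intro t
    induction t with
    | zero => simp
    | succ t ih =>
      have := hs_le t
      have : s t ≤ s (t + 1) := hs_mono (by omega)
      by_cases ht : s t < n
      · have := hs_lt t ht
        omega
      · omega
  have hex : ∃ t, s t = n := ⟨n, le_antisymm (hs_le n) (by simpa using hs_ge n)⟩
  obtain ⟨c, hlen, hc⟩ := Composition.exists_sizeUpTo_eq s rfl (Nat.find_spec hex)
    fun t ht => hs_lt t ((hs_le t).lt_of_ne (Nat.find_min hex ht))
  refine ⟨c, hf.1, fun k hk => ?_⟩
  rw [hc k (by omega), hc (k + 1) (by omega), hs_succ]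

theorem IsCompatible.isPF (hx : MonotoneOn x (Set.Ici 1)) {c : Composition n}
    {f : Fin n → ℕ} (hc : IsCompatible x c f) : IsPF x f := by
  refine ⟨hc.1, fun k hk1 hkn => ?_⟩
  obtain ⟨i, hi, hlt, hle⟩ := exists_lt_and_le_succ (A := c.sizeUpTo) (v := k) (L := c.length)
    (by rw [c.sizeUpTo_zero]; omega) (by rwa [c.sizeUpTo_length])
  calc k ≤ c.sizeUpTo (i + 1) := hle
    _ = nextBoundary x f (c.sizeUpTo i) := (hc.2 i hi).symm
    _ ≤ nextBoundary x f (k - 1) := monotone_nextBoundary hx f (by omega)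
    _ = #{j | f j ≤ x k} := by rw [nextBoundary, Nat.add_sub_cancel' hk1]

theorem IsCompatible.sizeUpTo_eq_iterate {c : Composition n} {f : Fin n → ℕ}
    (hc : IsCompatible x c f) : ∀ k ≤ c.length, c.sizeUpTo k = (nextBoundary x f)^[k] 0
  | 0, _ => c.sizeUpTo_zero
  | k + 1, hk => by
    rw [Function.iterate_succ_apply', ← hc.sizeUpTo_eq_iterate k (by omega), hc.2 k hk]

theorem IsCompatible.unique {c c' : Composition n} {f : Fin n → ℕ}
    (hc : IsCompatible x c f) (hc' : IsCompatible x c' f) : c = c' :=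
  Composition.ext_sizeUpTo fun k hk => by
    rw [hc.sizeUpTo_eq_iterate k (le_of_le_min_left hk),
      hc'.sizeUpTo_eq_iterate k (le_of_le_min_right hk)]

theorem isPF_iff_exists_isCompatible (hx : MonotoneOn x (Set.Ici 1)) {f : Fin n → ℕ} :
    IsPF x f ↔ ∃ c, IsCompatible x c f :=
  ⟨fun hf => hf.exists_isCompatible hx, fun ⟨_, hc⟩ => hc.isPF hx⟩

theorem IsCompatible.le_cutPoint_length {c : Composition n} {f : Fin n → ℕ}
    (hc : IsCompatible x c f) (j : Fin n) : f j ≤ cutPoint x c c.length := by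
  obtain ⟨m, hm⟩ : ∃ m, c.length = m + 1 :=
    ⟨c.length - 1, by have := c.length_pos_of_pos j.pos; omega⟩
  have hall : #{j | f j ≤ cutPoint x c (m + 1)} = #(univ : Finset (Fin n)) := by
    rw [card_univ, Fintype.card_fin]
    exact (hc.2 m (by omega)).trans (by rw [← hm, c.sizeUpTo_length])
  rw [hm]
  exact card_filter_eq_iff.1 hall j (mem_univ j)

def blockAssignments (c : Composition n) : Finset (Fin n → Fin c.length) :=
  {g | ∀ k, #{j | g j = k} = c.blocksFun k}

theorem card_blockAssignments (c : Composition n) :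
    #(blockAssignments c) = Nat.multinomial univ c.blocksFun := by
  unfold blockAssignments
  convert card_fun_fiber_eq_multinomial c.blocksFun (by rw [c.sum_blocksFun, Fintype.card_fin])

def compatibleFinset (x : ℕ → ℕ) (c : Composition n) : Finset (Fin n → ℕ) :=
  (blockAssignments c).biUnion fun g =>
    Fintype.piFinset fun j => Ioc (cutPoint x c (g j)) (cutPoint x c (g j + 1))

theorem mem_compatibleFinset (hx : MonotoneOn x (Set.Ici 1)) {c : Composition n}
    {f : Fin n → ℕ} : f ∈ compatibleFinset x c ↔ IsCompatible x c f := by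
  have hA := monotone_cutPoint hx c
  have hcount : ∀ g : Fin n → Fin c.length,
      (∀ j, f j ∈ Ioc (cutPoint x c (g j)) (cutPoint x c (g j + 1))) →
      ∀ k, nextBoundary x f (c.sizeUpTo k) = #{j | (g j : ℕ) < k + 1} := by
    intro g hg k
    refine congrArg card (filter_congr fun j _ => ?_)
    obtain ⟨h₁, h₂⟩ := mem_Ioc.1 (hg j)
    exact (hA.le_succ_iff_of_lt_of_le h₁ h₂ k).trans Nat.lt_succ_iff.symm
  simp only [compatibleFinset, blockAssignments, mem_biUnion, mem_filter, mem_univ, true_and,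
    Fintype.mem_piFinset, Composition.card_fiber_eq_blocksFun_iff]
  constructor
  · rintro ⟨g, hg, hfg⟩
    refine ⟨fun j => Nat.zero_lt_of_lt (mem_Ioc.1 (hfg j)).1, fun k hk => ?_⟩
    rw [hcount g hfg, hg (k + 1) hk]
  · intro hc
    have hblock : ∀ j, ∃ i : Fin c.length,
        f j ∈ Ioc (cutPoint x c i) (cutPoint x c (i + 1)) := by
      intro j
      obtain ⟨i, hi, hv⟩ := exists_lt_and_le_succ (A := cutPoint x c) (hc.1 j)
        (hc.le_cutPoint_length j)
      exact ⟨⟨i, hi⟩, mem_Ioc.2 hv⟩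
    choose g hg using hblock
    refine ⟨g, ?_, hg⟩
    rintro (_ | k) hk
    · simp
    · rw [← hcount g hg, hc.2 k hk]

theorem card_compatibleFinset (hx : MonotoneOn x (Set.Ici 1)) (c : Composition n) :
    #(compatibleFinset x c) = Nat.multinomial univ c.blocksFun *
      ∏ i, Upsilon x c i ^ c.blocksFun i := by
  have hA := monotone_cutPoint hx c
  have hdisj : (blockAssignments c : Set (Fin n → Fin c.length)).PairwiseDisjoint fun g =>
        Fintype.piFinset fun j => Ioc (cutPoint x c (g j)) (cutPoint x c (g j + 1)) := by
    intro g _ g' _ hne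
    refine disjoint_left.2 fun f hf hf' => hne (funext fun j => Fin.ext ?_)
    obtain ⟨h₁, h₂⟩ := mem_Ioc.1 (Fintype.mem_piFinset.1 hf j)
    obtain ⟨h₁', h₂'⟩ := mem_Ioc.1 (Fintype.mem_piFinset.1 hf' j)
    exact hA.eq_of_lt_of_le_succ h₁ h₂ h₁' h₂'
  have hterm : ∀ g ∈ blockAssignments c,
      #(Fintype.piFinset fun j => Ioc (cutPoint x c (g j)) (cutPoint x c (g j + 1))) =
        ∏ i, Upsilon x c i ^ c.blocksFun i := by
    intro g hg
    simp only [Fintype.card_piFinset, Nat.card_Ioc, ← upsilon_eq_cutPoint_sub]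
    rw [← prod_fiberwise' univ g (Upsilon x c)]
    refine prod_congr rfl fun k _ => ?_
    rw [prod_const, (mem_filter.1 hg).2 k]
  rw [compatibleFinset, card_biUnion hdisj, sum_congr rfl hterm, sum_const, smul_eq_mul,
    card_blockAssignments]

theorem pf_closed_formula_general (x : ℕ → ℕ) (hx : ∀ m, 1 ≤ m → x m ≤ x (m + 1))
    (n : ℕ) :
    PF x n = ∑ c : Composition n,
      Nat.multinomial Finset.univ c.blocksFun *
        ∏ i : Fin c.length, (Upsilon x c i) ^ c.blocksFun i := by
  have hx' : MonotoneOn x (Set.Ici 1) := monotoneOn_nat_Ici_of_le_succ hx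
  rw [PF, Nat.subtype_card (univ.biUnion (compatibleFinset x)) fun f => by
      simp [mem_compatibleFinset hx', isPF_iff_exists_isCompatible hx'],
    card_biUnion fun c _ c' _ hne => disjoint_left.2 fun _ hf hf' =>
      hne (((mem_compatibleFinset hx').1 hf).unique ((mem_compatibleFinset hx').1 hf'))]
  exact sum_congr rfl fun c _ => card_compatibleFinset hx' c

theorem pf_closed_formula (x : ℕ → ℕ) (hx : ∀ m, 1 ≤ m → x m ≤ x (m + 1))
    (n : ℕ) (hn : 1 ≤ n) :
    PF x n = ∑ c : Composition n,
      Nat.multinomial Finset.univ c.blocksFun *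
        ∏ i : Fin c.length, (Upsilon x c i) ^ c.blocksFun i :=
  pf_closed_formula_general x hx n
end

section
/- For every non-decreasing sequence x : ℕ → ℕ (indexed from 1) and every n ≥ 1, the number of non-decreasing x-parking functions of length n is given by the closed formula T(x; n) = Σ_{π composition of n} ∏_{i=1}^{ℓ(π)} C(π_i + Υ(x; π, i) − 1, π_i), where C(π_i + Υ(x; π, i) − 1, π_i) counts the multisets of size π_i on Υ(x; π, i) elements. -/
/-!
For a non-decreasing `f : Fin n → ℕ` the parking condition says exactly `1 ≤ f k ≤ x (k + 1)`
(indices from `0`). Such an `f` splits uniquely into its initial block of entries `≤ x 1`, of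
some length `m ≥ 1`, which is an arbitrary multiset of size `m` drawn from `{1, …, x 1}`, and the
remaining entries, which satisfy bounds of the same shape for the shifted sequence `x (· + m)`
except that the lower bound `1` becomes `x 1 + 1`. Carrying the lower bound as a parameter `a`,
the number of such tuples and the composition sum (split according to the first part) satisfy
the same recursion, with `Υ(x; π, 1) = x 1` replaced by `x 1 - a`; strong induction on `n`
concludes.
-/

open Finset

variable {a : ℕ} {x : ℕ → ℕ} {n : ℕ}

def monotoneEquivSym (α : Type*) [LinearOrder α] (m : ℕ) :
    {f : Fin m → α // Monotone f} ≃ Sym α m where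
  toFun f := ⟨List.ofFn f.1, by simp⟩
  invFun s := ⟨fun i => (s.1.sort (· ≤ ·)).get (i.cast (by simp)), fun _ _ hij =>
    (Multiset.pairwise_sort s.1 _).sortedLE.monotone_get hij⟩
  left_inv f := by
    have hsort : (List.ofFn f.1).mergeSort (fun a b => decide (a ≤ b)) = List.ofFn f.1 :=
      List.mergeSort_eq_self _ f.2.sortedLE_ofFn.pairwise
    ext i
    simp only [Multiset.coe_sort, List.get_eq_getElem, hsort, List.getElem_ofFn]
    rfl
  right_inv s := by
    apply Sym.coe_injective
    change ((List.ofFn fun i => (s.1.sort (· ≤ ·)).get (i.cast _) : List α) : Multiset α) = s.1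
    rw [← List.ofFn_congr (by simp), List.ofFn_get, Multiset.sort_eq]

theorem Fin.monotone_append {α : Type*} [Preorder α] {m r : ℕ} {g : Fin m → α} {h : Fin r → α}
    (hg : Monotone g) (hh : Monotone h) (hgh : ∀ i j, g i ≤ h j) : Monotone (Fin.append g h) := by
  intro i j hij
  induction i using Fin.addCases <;> induction j using Fin.addCases <;>
    simp only [Fin.append_left, Fin.append_right]
  · exact hg (Fin.le_iff_val_le_val.2 (Fin.le_iff_val_le_val.1 hij))
  · exact hgh _ _
  · exact absurd (Fin.le_iff_val_le_val.1 hij)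
      (by simp only [Fin.val_natAdd, Fin.val_castAdd]; omega)
  · exact hh ((Fin.natAdd_le_natAdd_iff m).1 hij)

theorem card_filter_le_eq_iff_of_monotone {α : Type*} [Preorder α] [DecidableLE α]
    {f : Fin n → α} (hf : Monotone f) {m : ℕ} (hm : m ≤ n) (t : α) :
    #{k | f k ≤ t} = m ↔ ∀ k : Fin n, (k < m ↔ f k ≤ t) := by
  constructor
  · rintro rfl k
    exact Tuple.lt_card_le_iff_apply_le_of_monotone hf
  · intro h
    rw [filter_congr fun k _ => (h k).symm, Fin.card_filter_val_lt, min_eq_right hm]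

namespace Composition

def cons {m r : ℕ} (hm : 0 < m) (hmr : m + r = n) (c : Composition r) : Composition n where
  blocks := m :: c.blocks
  blocks_pos := by
    intro i hi
    rcases List.mem_cons.1 hi with rfl | hi
    exacts [hm, c.blocks_pos hi]
  blocks_sum := by simp [c.blocks_sum, hmr]

theorem sizeUpTo_cons_succ {m r : ℕ} (hm : 0 < m) (hmr : m + r = n) (c : Composition r)
    (k : ℕ) : (c.cons hm hmr).sizeUpTo (k + 1) = m + c.sizeUpTo k := by
  simp [sizeUpTo, cons]

theorem sum_eq_sum_cons {M : Type*} [AddCommMonoid M] (hn : 0 < n) (F : Composition n → M) :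
    ∑ c, F c = ∑ j : Fin n, ∑ c : Composition (n - (j + 1)),
      F (cons (Nat.succ_pos j) (Nat.add_sub_of_le j.isLt) c) := by
  refine (Fintype.sum_bijective (fun p : Σ j : Fin n, Composition (n - (j + 1)) =>
    cons (Nat.succ_pos p.1) (Nat.add_sub_of_le p.1.isLt) p.2) ⟨?_, ?_⟩ _ _ fun _ => rfl).symm.trans
    (Fintype.sum_sigma _)
  · rintro ⟨j, c⟩ ⟨j', c'⟩ h
    obtain ⟨hj, hc⟩ := List.cons_eq_cons.1 (congrArg blocks h)
    obtain rfl : j = j' := Fin.ext (by simpa using hj)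
    obtain rfl : c = c' := Composition.ext hc
    rfl
  · intro c
    obtain ⟨b, l, hbl⟩ := List.exists_cons_of_length_pos (c.length_pos_of_pos hn)
    have hb : 0 < b := c.blocks_pos (by simp [hbl])
    have hsum : b + l.sum = n := by simpa [hbl] using c.blocks_sum
    refine ⟨⟨⟨b - 1, by omega⟩, ⟨l, fun hi => c.blocks_pos (by simp [hbl, hi]), ?_⟩⟩,
      Composition.ext ?_⟩
    · change l.sum = n - (b - 1 + 1)
      omega
    · change (b - 1 + 1) :: l = c.blocks
      rw [hbl, Nat.sub_add_cancel hb]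

end Composition

open Classical in
noncomputable def boundedMono (a : ℕ) (x : ℕ → ℕ) (n : ℕ) : Finset (Fin n → ℕ) :=
  {f ∈ Fintype.piFinset fun k : Fin n => Ioc a (x (k + 1)) | Monotone f}

theorem mem_boundedMono {f : Fin n → ℕ} :
    f ∈ boundedMono a x n ↔ Monotone f ∧ ∀ k, a < f k ∧ f k ≤ x (k + 1) := by
  simp [boundedMono, and_comm]

theorem card_boundedMono_zero : #(boundedMono a x 0) = 1 := by
  simp [boundedMono, Subsingleton.monotone]

theorem card_boundedMono_const (a b m : ℕ) :
    #(boundedMono a (fun _ => b) m) = Nat.multichoose (b - a) m := by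
  let e : boundedMono a (fun _ => b) m ≃ {g : Fin m → Ioc a b // Monotone g} :=
    { toFun f := ⟨fun i => ⟨f.1 i, mem_Ioc.2 ((mem_boundedMono.1 f.2).2 i)⟩,
        fun _ _ hij => (mem_boundedMono.1 f.2).1 hij⟩
      invFun g := ⟨fun i => g.1 i, mem_boundedMono.2 ⟨fun _ _ hij => g.2 hij,
        fun i => mem_Ioc.1 (g.1 i).2⟩⟩ }
  rw [← Nat.card_eq_finsetCard, Nat.card_congr (e.trans (monotoneEquivSym _ m)),
    Sym.natCard_sym_eq_multichoose, Nat.card_eq_finsetCard, Nat.card_Ioc]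

theorem isPF_and_monotone_iff {f : Fin n → ℕ} :
    IsPF x f ∧ Monotone f ↔ f ∈ boundedMono 0 x n := by
  rw [mem_boundedMono, and_comm]
  refine and_congr_right fun hf => ?_
  have key (k : Fin n) : k + 1 ≤ #{i | f i ≤ x (k + 1)} ↔ f k ≤ x (k + 1) :=
    Tuple.lt_card_le_iff_apply_le_of_monotone hf
  constructor
  · rintro ⟨hpos, hcard⟩ k
    exact ⟨hpos k, (key k).1 (hcard (k + 1) (by omega) k.2)⟩
  · intro h
    refine ⟨fun k => (h k).1, fun k hk hkn => ?_⟩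
    obtain ⟨j, rfl⟩ : ∃ j : Fin n, k = j + 1 := ⟨⟨k - 1, by omega⟩, by dsimp only; omega⟩
    exact (key j).2 (h j).2

theorem T_eq_card_boundedMono (x : ℕ → ℕ) (n : ℕ) : T x n = #(boundedMono 0 x n) := by
  rw [T, ← Nat.card_eq_finsetCard]
  exact Nat.card_congr (Equiv.subtypeEquivRight fun _ => isPF_and_monotone_iff)

theorem append_mem_boundedMono_iff (hx : MonotoneOn x (Set.Ici 1)) {m r : ℕ} (hm : 0 < m)
    {g : Fin m → ℕ} {h : Fin r → ℕ} :
    Fin.append g h ∈ boundedMono a x (m + r) ∧ #{k | Fin.append g h k ≤ x 1} = m ↔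
      g ∈ boundedMono a (fun _ => x 1) m ∧ h ∈ boundedMono (x 1) (fun k => x (k + m)) r := by
  have hsplit : (∀ k : Fin (m + r), (k < m ↔ Fin.append g h k ≤ x 1)) ↔
      (∀ i, g i ≤ x 1) ∧ ∀ j, x 1 < h j := by
    simp [Fin.forall_fin_add]
  simp only [mem_boundedMono]
  constructor
  · rintro ⟨⟨hf, hb⟩, hc⟩
    rw [card_filter_le_eq_iff_of_monotone hf (by omega), hsplit] at hc
    rw [Fin.forall_fin_add] at hb
    simp only [Fin.append_left, Fin.append_right, Fin.val_castAdd, Fin.val_natAdd] at hb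
    refine ⟨⟨fun i j hij => ?_, fun i => ⟨(hb.1 i).1, hc.1 i⟩⟩,
      ⟨fun i j hij => ?_, fun j => ⟨hc.2 j, ?_⟩⟩⟩
    · simpa using hf (show Fin.castAdd r i ≤ Fin.castAdd r j from hij)
    · simpa using hf ((Fin.natAdd_le_natAdd_iff m).2 hij)
    · exact (hb.2 j).2.trans_eq (congrArg x (by omega))
  · rintro ⟨⟨hg, hgb⟩, ⟨hh, hhb⟩⟩
    have hf : Monotone (Fin.append g h) :=
      Fin.monotone_append hg hh fun i j => (hgb i).2.trans (hhb j).1.le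
    refine ⟨⟨hf, (Fin.forall_fin_add _).2 ⟨fun i => ?_, fun j => ?_⟩⟩,
      (card_filter_le_eq_iff_of_monotone hf (by omega) _).2
        (hsplit.2 ⟨fun i => (hgb i).2, fun j => (hhb j).1⟩)⟩
    · simp only [Fin.append_left, Fin.val_castAdd]
      exact ⟨(hgb i).1, (hgb i).2.trans (hx (by simp) (by simp) (by omega))⟩
    · simp only [Fin.append_right, Fin.val_natAdd]
      refine ⟨(hgb ⟨0, hm⟩).1.trans ((hgb ⟨0, hm⟩).2.trans_lt (hhb j).1), ?_⟩
      exact (hhb j).2.trans_eq (congrArg x (by omega))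

theorem card_filter_boundedMono_card_eq (hx : MonotoneOn x (Set.Ici 1)) {m r : ℕ} (hm : 0 < m)
    (hmr : m + r = n) :
    #{f ∈ boundedMono a x n | #{k | f k ≤ x 1} = m} =
      Nat.multichoose (x 1 - a) m * #(boundedMono (x 1) (fun k => x (k + m)) r) := by
  subst hmr
  rw [← card_boundedMono_const, ← card_product]
  refine (card_equiv (Fin.appendEquiv m r) fun p => ?_).symm
  rw [mem_product, mem_filter]
  exact (append_mem_boundedMono_iff hx hm).symm

theorem card_boundedMono_eq_sum (hx : MonotoneOn x (Set.Ici 1)) (hn : 0 < n) :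
    #(boundedMono a x n) = ∑ j : Fin n,
      Nat.multichoose (x 1 - a) (j + 1) *
        #(boundedMono (x 1) (fun k => x (k + (j + 1))) (n - (j + 1))) := by
  have hcount (f : Fin n → ℕ) : #{k | f k ≤ x 1} ∈ range (n + 1) :=
    mem_range.2 (Nat.lt_succ_of_le ((card_le_univ _).trans_eq (Fintype.card_fin n)))
  have hzero : #{f ∈ boundedMono a x n | #{k | f k ≤ x 1} = 0} = 0 := by
    refine card_eq_zero.2 (filter_false_of_mem fun f hf => ?_)
    refine (card_pos.2 ⟨⟨0, hn⟩, mem_filter.2 ⟨mem_univ _, ?_⟩⟩).ne'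
    exact ((mem_boundedMono.1 hf).2 ⟨0, hn⟩).2
  rw [card_eq_sum_card_fiberwise fun f _ => hcount f, sum_range_succ', hzero, add_zero,
    Fin.sum_univ_eq_sum_range (fun j => Nat.multichoose (x 1 - a) (j + 1) *
      #(boundedMono (x 1) (fun k => x (k + (j + 1))) (n - (j + 1))))]
  exact sum_congr rfl fun j hj =>
    card_filter_boundedMono_card_eq hx j.succ_pos (by have := mem_range.1 hj; omega)

def upsilonFrom (a : ℕ) (x : ℕ → ℕ) {n : ℕ} (c : Composition n) (i : Fin c.length) : ℕ :=
  if i.val = 0 then x 1 - a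
  else x (1 + c.sizeUpTo i.val) - x (1 + c.sizeUpTo (i.val - 1))

def closedForm (a : ℕ) (x : ℕ → ℕ) (n : ℕ) : ℕ :=
  ∑ c : Composition n, ∏ i, Nat.multichoose (upsilonFrom a x c i) (c.blocksFun i)

theorem upsilonFrom_zero (c : Composition n) (i : Fin c.length) :
    upsilonFrom 0 x c i = Upsilon x c i := by
  simp [upsilonFrom, Upsilon]

theorem upsilonFrom_cons_succ {m r : ℕ} (hm : 0 < m) (hmr : m + r = n) (c : Composition r)
    (i : Fin c.length) :
    upsilonFrom a x (c.cons hm hmr) i.succ = upsilonFrom (x 1) (fun k => x (k + m)) c i := by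
  rcases i with ⟨_ | k, hk⟩
  · simp [upsilonFrom, Composition.sizeUpTo_cons_succ, add_comm]
  · simp [upsilonFrom, Composition.sizeUpTo_cons_succ, add_comm, add_left_comm, add_assoc]

theorem prod_multichoose_upsilonFrom_cons {m r : ℕ} (hm : 0 < m) (hmr : m + r = n)
    (c : Composition r) :
    ∏ i, Nat.multichoose (upsilonFrom a x (c.cons hm hmr) i) ((c.cons hm hmr).blocksFun i) =
      Nat.multichoose (x 1 - a) m *
        ∏ i, Nat.multichoose (upsilonFrom (x 1) (fun k => x (k + m)) c i) (c.blocksFun i) := by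
  refine (Fin.prod_univ_succ _).trans ?_
  simp only [upsilonFrom_cons_succ]
  rfl

theorem closedForm_zero : closedForm a x 0 = 1 := by
  have (c : Composition 0) : ∏ i, Nat.multichoose (upsilonFrom a x c i) (c.blocksFun i) = 1 :=
    prod_eq_one fun i _ => absurd (i.isLt.trans_le c.length_le) (Nat.not_lt_zero _)
  simp [closedForm, this, composition_card]

theorem closedForm_eq_sum (hn : 0 < n) :
    closedForm a x n = ∑ j : Fin n,
      Nat.multichoose (x 1 - a) (j + 1) *
        closedForm (x 1) (fun k => x (k + (j + 1))) (n - (j + 1)) := by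
  rw [closedForm, Composition.sum_eq_sum_cons hn]
  simp only [prod_multichoose_upsilonFrom_cons, closedForm, mul_sum]

theorem card_boundedMono_eq_closedForm (hx : MonotoneOn x (Set.Ici 1)) :
    #(boundedMono a x n) = closedForm a x n := by
  induction n using Nat.strong_induction_on generalizing a x with
  | _ n ih =>
    rcases n.eq_zero_or_pos with rfl | hn
    · rw [card_boundedMono_zero, closedForm_zero]
    rw [card_boundedMono_eq_sum hx hn, closedForm_eq_sum hn]
    refine sum_congr rfl fun j _ => ?_
    have hshift : MonotoneOn (fun k => x (k + (j + 1))) (Set.Ici 1) := fun _ _ _ _ hpq =>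
      hx (Set.mem_Ici.2 (by omega)) (Set.mem_Ici.2 (by omega)) (by omega)
    rw [ih _ (by omega) hshift]

theorem pf_types_closed_formula_general (x : ℕ → ℕ) (hx : ∀ m, 1 ≤ m → x m ≤ x (m + 1))
    (n : ℕ) :
    T x n = ∑ c : Composition n,
      ∏ i : Fin c.length,
        (c.blocksFun i + Upsilon x c i - 1).choose (c.blocksFun i) := by
  rw [T_eq_card_boundedMono, card_boundedMono_eq_closedForm (monotoneOn_nat_Ici_of_le_succ hx)]
  refine sum_congr rfl fun c _ => prod_congr rfl fun i _ => ?_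
  rw [upsilonFrom_zero, Nat.multichoose_eq, add_comm]

theorem pf_types_closed_formula (x : ℕ → ℕ) (hx : ∀ m, 1 ≤ m → x m ≤ x (m + 1))
    (n : ℕ) (hn : 1 ≤ n) :
    T x n = ∑ c : Composition n,
      ∏ i : Fin c.length,
        (c.blocksFun i + Upsilon x c i - 1).choose (c.blocksFun i) :=
  pf_types_closed_formula_general x hx n
end

section
/- For every non-decreasing sequence x : ℕ → ℕ (indexed from 1) and every n ≥ 1, the following alternating-sum identity holds in ℤ: PF(x; n) = Σ_{π composition of n} (−1)^{n − ℓ(π)} · (n! / (π_1! ⋯ π_{ℓ(π)}!)) · ∏_{i=1}^{ℓ(π)} x(1 + π(i−1))^{π_i}, where π(i) denotes the i-th partial sum of π with π(0) = 0. -/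
open Finset

section Parking

variable {ι κ : Type*} [Fintype ι] [Fintype κ] {x : ℕ → ℕ}

def IsParking (x : ℕ → ℕ) (f : ι → ℕ) : Prop :=
  (∀ i, 1 ≤ f i) ∧ ∀ k, 1 ≤ k → k ≤ Fintype.card ι → k ≤ #{i | f i ≤ x k}

theorem isPF_iff_isParking {n : ℕ} {f : Fin n → ℕ} : IsPF x f ↔ IsParking x f := by
  simp [IsPF, IsParking]

theorem isParking_comp_equiv_iff (e : ι ≃ κ) {f : κ → ℕ} :
    IsParking x (f ∘ e) ↔ IsParking x f := by
  have hcard (k : ℕ) : #{i | f (e i) ≤ x k} = #{j | f j ≤ x k} := by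
    simp only [← Fintype.card_subtype]
    exact Fintype.card_congr (e.subtypeEquiv fun _ => Iff.rfl)
  simp only [IsParking, Function.comp_apply, hcard, Fintype.card_congr e, e.forall_congr_left,
    Equiv.apply_symm_apply]

theorem card_isParking_eq_PF (x : ℕ → ℕ) (ι : Type*) [Fintype ι] :
    Nat.card {f : ι → ℕ // IsParking x f} = PF x (Fintype.card ι) := by
  let e := Fintype.equivFin ι
  rw [PF, Nat.card_congr
    (Equiv.subtypeEquivRight fun f : Fin _ → ℕ => isPF_iff_isParking (x := x))]
  exact Nat.card_congr ((e.arrowCongr (Equiv.refl ℕ)).subtypeEquiv fun f =>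
    (isParking_comp_equiv_iff e.symm).symm)

theorem IsParking.le_card {f : ι → ℕ} (hf : IsParking x f) (i : ι) :
    f i ≤ x (Fintype.card ι) := by
  have hall := eq_of_subset_of_card_le (filter_subset _ univ)
    (hf.2 _ (Fintype.card_pos_iff.mpr ⟨i⟩) le_rfl)
  rw [eq_univ_iff_forall] at hall
  exact (mem_filter.mp (hall i)).2

theorem finite_setOf_isParking [DecidableEq ι] : {f : ι → ℕ | IsParking x f}.Finite :=
  (Set.finite_Icc 1 fun _ => x (Fintype.card ι)).subset fun _ hf => ⟨hf.1, hf.le_card⟩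

end Parking

section Restriction

variable {ι : Type*} [Fintype ι] [DecidableEq ι] {x : ℕ → ℕ}

theorem card_filter_subtype_notMem_add (S : Finset ι) (p : ι → Prop) [DecidablePred p] :
    #{i : {i // i ∉ S} | p i} + #{i ∈ S | p i} = #{i | p i} := by
  have hout : #{i : {i // i ∉ S} | p i} = #(({i | p i} : Finset ι).filter (· ∉ S)) := by
    rw [← card_subtype (· ∉ S)]
    apply congrArg
    ext
    simp
  have hin : #{i ∈ S | p i} = #(({i | p i} : Finset ι).filter (· ∈ S)) := by
    congr 1
    ext
    simp [and_comm]
  rw [hout, hin, add_comm, card_filter_add_card_filter_not]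

theorem isParking_and_forall_mem_le_iff (hx : ∀ k, 1 ≤ k → x 1 ≤ x k) (S : Finset ι)
    (g : ι → ℕ) :
    IsParking x g ∧ (∀ i ∈ S, g i ≤ x 1) ↔
      (∀ i : S, g i ∈ Icc 1 (x 1)) ∧
        IsParking (fun k => x (k + #S)) fun i : {i // i ∉ S} => g i := by
  have hcardS : Fintype.card {i // i ∉ S} = Fintype.card ι - #S := by
    rw [Fintype.card_subtype_compl, Fintype.card_coe]
  have hsplit (k : ℕ) := card_filter_subtype_notMem_add S (fun i => g i ≤ x k)
  have hS : #S ≤ Fintype.card ι := card_le_univ S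
  constructor
  · rintro ⟨hg, hgS⟩
    refine ⟨fun i => mem_Icc.mpr ⟨hg.1 i, hgS i i.2⟩, fun i => hg.1 i, fun k hk hkS => ?_⟩
    have hSk : #{i ∈ S | g i ≤ x (k + #S)} = #S := by
      rw [filter_true_of_mem fun i hi => (hgS i hi).trans (hx _ (by omega))]
    have hpark := hg.2 (k + #S) (by omega) (by omega)
    have hsplitk := hsplit (k + #S)
    beta_reduce
    omega
  · rintro ⟨hgS, hg⟩
    have hgS' (i) (hi : i ∈ S) : g i ∈ Icc 1 (x 1) := hgS ⟨i, hi⟩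
    refine ⟨⟨fun i => ?_, fun k hk hkι => ?_⟩, fun i hi => (mem_Icc.mp (hgS' i hi)).2⟩
    · by_cases hi : i ∈ S
      · exact (mem_Icc.mp (hgS' i hi)).1
      · exact hg.1 ⟨i, hi⟩
    · have hSk : #{i ∈ S | g i ≤ x k} = #S := by
        rw [filter_true_of_mem fun i hi => (mem_Icc.mp (hgS' i hi)).2.trans (hx _ hk)]
      rw [← hsplit k]
      by_cases hkS : k ≤ #S
      · omega
      · have hpark := hg.2 (k - #S) (by omega) (by omega)
        beta_reduce at hpark
        rw [Nat.sub_add_cancel (by omega)] at hpark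
        omega

theorem card_isParking_and_forall_mem_le (hx : ∀ k, 1 ≤ k → x 1 ≤ x k) (S : Finset ι) :
    Nat.card {g : ι → ℕ // IsParking x g ∧ ∀ i ∈ S, g i ≤ x 1} =
      x 1 ^ #S * PF (fun k => x (k + #S)) (Fintype.card ι - #S) := by
  let split := Equiv.piEquivPiSubtypeProd (· ∈ S) fun _ => ℕ
  rw [Nat.card_congr (split.subtypeEquiv (q := fun p =>
      (∀ i, p.1 i ∈ Icc 1 (x 1)) ∧ IsParking (fun k => x (k + #S)) p.2)
      (isParking_and_forall_mem_le_iff hx S)),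
    Nat.card_congr (Equiv.subtypeProdEquivProd (p := fun a : S → ℕ => ∀ i, a i ∈ Icc 1 (x 1))
      (q := IsParking (fun k => x (k + #S)))),
    Nat.card_prod, Nat.card_congr Equiv.subtypePiEquivPi, Nat.card_fun, card_isParking_eq_PF,
    Fintype.card_subtype_compl, Fintype.card_coe]
  rw [Nat.card_eq_finsetCard, Nat.card_eq_finsetCard, Nat.card_Icc, Nat.add_sub_cancel]

theorem sum_neg_one_pow_card_mul_card_isParking [Nonempty ι] :
    ∑ S : Finset ι, (-1 : ℤ) ^ #S *
      Nat.card {g : ι → ℕ // IsParking x g ∧ ∀ i ∈ S, g i ≤ x 1} = 0 := by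
  obtain ⟨P, hP⟩ := (finite_setOf_isParking (ι := ι) (x := x)).exists_finset
  have hcard (S : Finset ι) : Nat.card {g : ι → ℕ // IsParking x g ∧ ∀ i ∈ S, g i ≤ x 1} =
      #{g ∈ P | S ⊆ ({i | g i ≤ x 1} : Finset ι)} := by
    rw [← Nat.card_eq_finsetCard]
    exact Nat.card_congr (Equiv.subtypeEquivRight fun g => by simp [hP, subset_iff])
  have hlow (g) (hg : g ∈ P) : ({i | g i ≤ x 1} : Finset ι).Nonempty :=
    card_pos.mp (((hP g).mp hg).2 1 le_rfl Fintype.card_pos)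
  calc ∑ S : Finset ι, (-1 : ℤ) ^ #S *
        Nat.card {g : ι → ℕ // IsParking x g ∧ ∀ i ∈ S, g i ≤ x 1}
      = ∑ S : Finset ι, ∑ g ∈ P with S ⊆ ({i | g i ≤ x 1} : Finset ι), (-1 : ℤ) ^ #S := by
        simp [hcard, mul_comm]
    _ = ∑ g ∈ P, ∑ S ∈ ({i | g i ≤ x 1} : Finset ι).powerset, (-1 : ℤ) ^ #S :=
        sum_comm' fun S g => by simp [and_comm]
    _ = 0 := sum_eq_zero fun g hg => sum_powerset_neg_one_pow_card_of_nonempty (hlow g hg)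

end Restriction

theorem PF_zero (x : ℕ → ℕ) : PF x 0 = 1 := by
  rw [PF, Nat.card_congr (Equiv.subtypeUnivEquiv fun f =>
    ⟨fun i => i.elim0, fun k hk hk0 => by omega⟩), Nat.card_unique]

theorem sum_range_neg_one_pow_mul_choose_mul_PF_eq_zero {x : ℕ → ℕ}
    (hx : ∀ k, 1 ≤ k → x 1 ≤ x k) {n : ℕ} (hn : 0 < n) :
    ∑ j ∈ range (n + 1), (-1 : ℤ) ^ j * n.choose j * x 1 ^ j * PF (fun k => x (k + j)) (n - j)
      = 0 := by
  have : Nonempty (Fin n) := ⟨⟨0, hn⟩⟩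
  have h := sum_neg_one_pow_card_mul_card_isParking (ι := Fin n) (x := x)
  simp only [card_isParking_and_forall_mem_le hx, Fintype.card_fin] at h
  rw [← powerset_univ, sum_powerset_apply_card
    (fun j => (-1 : ℤ) ^ j * ((x 1 ^ j * PF (fun k => x (k + j)) (n - j) : ℕ) : ℤ))] at h
  rw [← h, card_univ, Fintype.card_fin]
  refine sum_congr rfl fun j _ => ?_
  push_cast
  ring

theorem PF_eq_sum_range {x : ℕ → ℕ} (hx : ∀ k, 1 ≤ k → x 1 ≤ x k) {n : ℕ} (hn : 0 < n) :
    (PF x n : ℤ) = ∑ j ∈ range n, (-1 : ℤ) ^ j * n.choose (j + 1) * x 1 ^ (j + 1) *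
      PF (fun k => x (k + (j + 1))) (n - (j + 1)) := by
  have h := sum_range_neg_one_pow_mul_choose_mul_PF_eq_zero hx hn
  rw [sum_range_succ'] at h
  simp only [pow_zero, Nat.choose_zero_right, add_zero, Nat.sub_zero, Nat.cast_one, one_mul,
    mul_one] at h
  rw [eq_neg_of_add_eq_zero_right h, ← sum_neg_distrib]
  exact sum_congr rfl fun j _ => by ring

theorem Nat.multinomial_univ_fin_succ {m : ℕ} (g : Fin (m + 1) → ℕ) :
    Nat.multinomial univ g =
      (g 0 + ∑ i : Fin m, g i.succ).choose (g 0) *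
        Nat.multinomial univ fun i : Fin m => g i.succ := by
  rw [Fin.univ_succ, Nat.multinomial_cons]
  simp [Nat.multinomial, sum_map, prod_map]

namespace Composition

def consBlock {n b : ℕ} (hb : 0 < b) (hbn : b ≤ n) (c : Composition (n - b)) :
    Composition n where
  blocks := b :: c.blocks
  blocks_pos := by
    simp only [List.mem_cons, forall_eq_or_imp]
    exact ⟨hb, fun _ => c.blocks_pos⟩
  blocks_sum := by
    rw [List.sum_cons, c.blocks_sum]
    omega

section ConsBlock

variable {n b : ℕ} (hb : 0 < b) (hbn : b ≤ n) (c : Composition (n - b))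

theorem length_consBlock : (consBlock hb hbn c).length = c.length + 1 := rfl

theorem prod_consBlock {M : Type*} [CommMonoid M] (f : ℕ → ℕ → M) :
    ∏ i : Fin (consBlock hb hbn c).length,
        f ((consBlock hb hbn c).sizeUpTo i) ((consBlock hb hbn c).blocksFun i) =
      f 0 b * ∏ i : Fin c.length, f (b + c.sizeUpTo i) (c.blocksFun i) := by
  refine (Fin.prod_univ_succ (n := c.length) _).trans ?_
  simp [consBlock, sizeUpTo, blocksFun]

theorem multinomial_consBlock :
    Nat.multinomial univ (consBlock hb hbn c).blocksFun =
      n.choose b * Nat.multinomial univ c.blocksFun := by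
  refine (Nat.multinomial_univ_fin_succ (m := c.length) _).trans ?_
  change (b + ∑ i, c.blocksFun i).choose b * Nat.multinomial univ c.blocksFun = _
  rw [c.sum_blocksFun, Nat.add_sub_cancel' hbn]

end ConsBlock

theorem bijective_sigma_consBlock {n : ℕ} (hn : 0 < n) :
    Function.Bijective fun p : Σ j : Fin n, Composition (n - (j + 1)) =>
      consBlock (Nat.succ_pos p.1) p.1.isLt p.2 := by
  constructor
  · rintro ⟨j, c⟩ ⟨j', c'⟩ h
    obtain ⟨hj, hc⟩ := List.cons.inj (congrArg blocks h)
    obtain rfl : j = j' := Fin.ext (Nat.succ_injective hj)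
    obtain rfl : c = c' := Composition.ext hc
    rfl
  · intro c
    obtain ⟨b, l, hc⟩ := List.exists_cons_of_ne_nil (c.blocks_eq_nil.not.mpr hn.ne')
    have hb : 1 ≤ b := c.one_le_blocks (hc ▸ List.mem_cons_self)
    have hsum : b + l.sum = n := by rw [← List.sum_cons, ← hc, c.blocks_sum]
    refine ⟨⟨⟨b - 1, by omega⟩, ⟨l, fun hi => c.blocks_pos (hc ▸ List.mem_cons_of_mem b hi),
      show l.sum = n - (b - 1 + 1) by omega⟩⟩, Composition.ext ?_⟩
    change (b - 1 + 1) :: l = c.blocks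
    rw [hc, Nat.sub_add_cancel hb]

theorem sum_eq_sum_consBlock {M : Type*} [AddCommMonoid M] {n : ℕ} (hn : 0 < n)
    (f : Composition n → M) :
    ∑ c, f c =
      ∑ j : Fin n, ∑ c : Composition (n - (j + 1)), f (consBlock (Nat.succ_pos j) j.isLt c) :=
  (Fintype.sum_bijective _ (bijective_sigma_consBlock hn) _ _ fun _ => rfl).symm.trans
    (Fintype.sum_sigma _)

end Composition

def compositionTerm (x : ℕ → ℕ) {n : ℕ} (c : Composition n) : ℤ :=
  (-1) ^ (n - c.length) * (Nat.multinomial univ c.blocksFun : ℤ) *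
    ∏ i : Fin c.length, (x (1 + c.sizeUpTo i) : ℤ) ^ c.blocksFun i

def compositionSum (x : ℕ → ℕ) (n : ℕ) : ℤ :=
  ∑ c : Composition n, compositionTerm x c

theorem compositionTerm_consBlock (x : ℕ → ℕ) {n b : ℕ} (hb : 0 < b) (hbn : b ≤ n)
    (c : Composition (n - b)) :
    compositionTerm x (c.consBlock hb hbn) =
      (-1) ^ (b - 1) * n.choose b * x 1 ^ b * compositionTerm (fun k => x (k + b)) c := by
  have hsign : n - (c.length + 1) = (b - 1) + (n - b - c.length) := by
    have := c.length_le
    omega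
  have hprod : ∏ i : Fin c.length, (x (1 + (b + c.sizeUpTo i)) : ℤ) ^ c.blocksFun i =
      ∏ i : Fin c.length, (x (1 + c.sizeUpTo i + b) : ℤ) ^ c.blocksFun i :=
    prod_congr rfl fun i _ => by rw [add_left_comm, add_comm b]
  rw [compositionTerm, compositionTerm,
    Composition.prod_consBlock (f := fun s m => (x (1 + s) : ℤ) ^ m),
    Composition.multinomial_consBlock, Composition.length_consBlock, hsign, pow_add, hprod]
  push_cast
  ring

theorem compositionSum_zero (x : ℕ → ℕ) : compositionSum x 0 = 1 := by
  have hones (c : Composition 0) : c = Composition.ones 0 :=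
    Composition.ext (by simp [c.blocks_eq_nil])
  rw [compositionSum, Fintype.sum_eq_single _ fun c hc => absurd (hones c) hc]
  simp [compositionTerm, Nat.multinomial]

theorem compositionSum_eq_sum_range (x : ℕ → ℕ) {n : ℕ} (hn : 0 < n) :
    compositionSum x n = ∑ j ∈ range n, (-1 : ℤ) ^ j * n.choose (j + 1) * x 1 ^ (j + 1) *
      compositionSum (fun k => x (k + (j + 1))) (n - (j + 1)) := by
  rw [compositionSum, Composition.sum_eq_sum_consBlock hn]
  simp only [compositionTerm_consBlock, ← mul_sum]
  exact Fin.sum_univ_eq_sum_range (fun j => (-1 : ℤ) ^ j * n.choose (j + 1) * x 1 ^ (j + 1) *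
    compositionSum (fun k => x (k + (j + 1))) (n - (j + 1))) n

theorem PF_eq_compositionSum {x : ℕ → ℕ} (hx : MonotoneOn x (Set.Ici 1)) (n : ℕ) :
    (PF x n : ℤ) = compositionSum x n := by
  induction n using Nat.strong_induction_on generalizing x with
  | _ n ih =>
    rcases n.eq_zero_or_pos with rfl | hn
    · rw [PF_zero, compositionSum_zero, Nat.cast_one]
    have hshift (j : ℕ) : MonotoneOn (fun k => x (k + j)) (Set.Ici 1) :=
      fun _ ha _ hb hab =>
        hx (Nat.le_add_right_of_le ha) (Nat.le_add_right_of_le hb) (Nat.add_le_add_right hab j)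
    rw [PF_eq_sum_range (fun k hk => hx Set.self_mem_Ici hk hk) hn,
      compositionSum_eq_sum_range x hn]
    refine sum_congr rfl fun j _ => ?_
    rw [ih _ (Nat.sub_lt hn j.succ_pos) (hshift (j + 1))]

theorem pf_inclusion_exclusion_formula_general (x : ℕ → ℕ)
    (hx : ∀ m, 1 ≤ m → x m ≤ x (m + 1)) (n : ℕ) :
    (PF x n : ℤ) = ∑ c : Composition n,
      (-1 : ℤ) ^ (n - c.length) *
        (Nat.multinomial Finset.univ c.blocksFun : ℤ) *
        ∏ i : Fin c.length, (x (1 + c.sizeUpTo i.val) : ℤ) ^ c.blocksFun i :=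
  PF_eq_compositionSum (monotoneOn_of_le_succ Set.ordConnected_Ici
    fun a _ ha _ => by simpa using hx a ha) n

theorem pf_inclusion_exclusion_formula (x : ℕ → ℕ)
    (hx : ∀ m, 1 ≤ m → x m ≤ x (m + 1)) (n : ℕ) (hn : 1 ≤ n) :
    (PF x n : ℤ) = ∑ c : Composition n,
      (-1 : ℤ) ^ (n - c.length) *
        (Nat.multinomial Finset.univ c.blocksFun : ℤ) *
        ∏ i : Fin c.length, (x (1 + c.sizeUpTo i.val) : ℤ) ^ c.blocksFun i :=
  pf_inclusion_exclusion_formula_general x hx n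
end

section
/- Let x : ℕ → ℕ (indexed from 1) be non-decreasing and n ≥ 1. In the free ℤ-module with basis the functions Fin n → ℕ (e.g., (Fin n → ℕ) →₀ ℤ), the following inclusion–exclusion identity holds: Σ_{f an x-parking function of length n} [f] = Σ_{(B_1, …, B_k) ordered set partition of Fin n} (−1)^{n − k} · Σ_{q : Fin n → ℕ, 1 ≤ q(i) ≤ p_B(i) for all i} [q], where [g] denotes the basis element indexed by g. (Every q with 1 ≤ q(i) ≤ p_B(i) pointwise is automatically an x-parking function, so both sides are supported on x-parking functions.) -/
/-- An ordered set partition of `Fin n`: a finite sequence of nonempty pairwise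
disjoint subsets of `Fin n` covering `Fin n`. -/
def IsOSP {n : ℕ} (B : List (Finset (Fin n))) : Prop :=
  (∀ b ∈ B, b.Nonempty) ∧ B.Pairwise Disjoint ∧ ∀ i : Fin n, ∃ b ∈ B, i ∈ b

/-- The primitive parking function `p_B` associated to an ordered set partition:
`p_B(i) = x(1 + |B_1| + ⋯ + |B_(j-1)|)` when `i ∈ B_j`. -/
def pB (x : ℕ → ℕ) {n : ℕ} (B : List (Finset (Fin n))) (i : Fin n) : ℕ :=
  x (1 + ((B.takeWhile (fun b => decide (i ∉ b))).map Finset.card).sum)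

/-!
Comparing coefficients at `g`, both sides vanish unless `g ≥ 1`; otherwise the right side is the
signed count of ordered set partitions `B` with `g ≤ p_B`, and the claim is that this count is `1`
or `0` according as `g` is an `x`-parking function.

To induct, count ordered partitions of an arbitrary subset `U`. The first block `b` of a partition
with `g ≤ p_B` is any nonempty subset of `{i ∈ U | g i ≤ x 1}`, and the remaining blocks form such a
partition of `U \ b` for the shifted sequence `x (· + #b)`. Since `x` is monotone, `g` parks on
`U \ b` for the shifted sequence exactly when it parks on `U` for `x`, independently of `b`. The
signed sum is therefore that indicator times `∑ (-1) ^ (#b + 1)` over the nonempty `b`, which is `1`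
because `{i ∈ U | g i ≤ x 1}` is nonempty whenever `g` parks on `U`.
-/

lemma Finsupp.finsum_mem_apply {α β M : Type*} [AddCommMonoid M] {s : Set α} (hs : s.Finite)
    (F : α → β →₀ M) (b : β) : (∑ᶠ a ∈ s, F a) b = ∑ᶠ a ∈ s, F a b :=
  (Finsupp.applyAddHom b).map_finsum_mem F hs

lemma Finsupp.finsum_mem_single_apply {α M : Type*} [AddCommMonoid M] {s : Set α}
    (hs : s.Finite) (m : M) (a : α) :
    (∑ᶠ b ∈ s, Finsupp.single b m) a = s.indicator (fun _ => m) a := by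
  classical
  rw [finsum_mem_eq_finite_toFinset_sum _ hs, Finsupp.finsetSum_apply]
  simp [Finsupp.single_apply, Set.indicator_apply]

lemma finsum_mem_inter_indicator {α M : Type*} [AddCommMonoid M] (s t : Set α) (g : α → M) :
    ∑ᶠ a ∈ s, t.indicator g a = ∑ᶠ a ∈ s ∩ t, g a := by
  rw [finsum_mem_def, finsum_mem_def, Set.indicator_indicator]

lemma neg_one_pow_sub_of_le {a b : ℕ} (h : b ≤ a) : (-1 : ℤ) ^ (a - b) = (-1) ^ (a + b) := by
  rw [show a + b = a - b + 2 * b by omega, pow_add, pow_mul]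
  simp

section

open Finset

variable {n : ℕ}

lemma sum_powerset_filter_nonempty_neg_one_pow {α : Type*} {s : Finset α} (hs : s.Nonempty) :
    ∑ t ∈ s.powerset with t.Nonempty, (-1 : ℤ) ^ #t = -1 := by
  have := sum_filter_add_sum_filter_not s.powerset Finset.Nonempty fun t => (-1 : ℤ) ^ #t
  have hempty : {t ∈ s.powerset | ¬t.Nonempty} = {∅} := by
    ext t
    simp +contextual [not_nonempty_iff_eq_empty]
  rwa [sum_powerset_neg_one_pow_card_of_nonempty hs, hempty, sum_singleton, card_empty, pow_zero,
    add_eq_zero_iff_eq_neg] at this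

lemma pB_cons_of_mem (x : ℕ → ℕ) {b : Finset (Fin n)} (B : List (Finset (Fin n))) {i : Fin n}
    (hi : i ∈ b) : pB x (b :: B) i = x 1 := by
  simp [pB, hi]

lemma pB_cons_of_notMem (x : ℕ → ℕ) {b : Finset (Fin n)} (B : List (Finset (Fin n)))
    {i : Fin n} (hi : i ∉ b) : pB x (b :: B) i = pB (fun k => x (k + #b)) B i := by
  simp only [pB, hi, not_false_eq_true, decide_true, List.takeWhile_cons_of_pos, List.map_cons,
    List.sum_cons]
  exact congrArg x (by omega)

def IsOrderedPartition : Finset (Fin n) → List (Finset (Fin n)) → Prop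
  | U, [] => U = ∅
  | U, b :: B => b.Nonempty ∧ b ⊆ U ∧ IsOrderedPartition (U \ b) B

lemma isOrderedPartition_iff {U : Finset (Fin n)} {B : List (Finset (Fin n))} :
    IsOrderedPartition U B ↔
      (∀ b ∈ B, b.Nonempty) ∧ B.Pairwise Disjoint ∧ ∀ i, i ∈ U ↔ ∃ b ∈ B, i ∈ b := by
  induction B generalizing U with
  | nil => simp [IsOrderedPartition, Finset.eq_empty_iff_forall_notMem]
  | cons b B ih =>
    simp only [IsOrderedPartition, ih, List.mem_cons, forall_eq_or_imp, or_and_right,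
      exists_or, exists_eq_left, List.pairwise_cons, Finset.disjoint_left, Finset.mem_sdiff]
    constructor
    · rintro ⟨hb, hbU, hne, hpw, hcov⟩
      refine ⟨⟨hb, hne⟩, ⟨fun c hc i hib hic => ((hcov i).mpr ⟨c, hc, hic⟩).2 hib, hpw⟩,
        fun i => ?_⟩
      by_cases hib : i ∈ b
      · simp [hib, hbU hib]
      · simp [hib, ← hcov]
    · rintro ⟨⟨hb, hne⟩, ⟨hdisj, hpw⟩, hcov⟩
      refine ⟨hb, fun i hi => (hcov i).mpr (.inl hi), hne, hpw, fun i => ?_⟩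
      constructor
      · rintro ⟨hiU, hib⟩
        exact ((hcov i).mp hiU).resolve_left hib
      · rintro ⟨c, hc, hic⟩
        exact ⟨(hcov i).mpr (.inr ⟨c, hc, hic⟩), fun hib => hdisj c hc hib hic⟩

lemma isOSP_iff_isOrderedPartition_univ {B : List (Finset (Fin n))} :
    IsOSP B ↔ IsOrderedPartition univ B := by
  simp [IsOSP, isOrderedPartition_iff]

lemma IsOrderedPartition.length_le_card :
    ∀ {U : Finset (Fin n)} {B : List (Finset (Fin n))}, IsOrderedPartition U B → B.length ≤ #U
  | _, [], _ => by simp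
  | _, _ :: _, ⟨hb, hbU, hB⟩ => by
    have := hB.length_le_card
    have := card_sdiff_add_card_eq_card hbU
    have := hb.card_pos
    simp only [List.length_cons]
    omega

lemma finite_setOf_isOrderedPartition (U : Finset (Fin n)) :
    {B | IsOrderedPartition U B}.Finite :=
  (List.finite_length_le _ #U).subset fun _ hB => IsOrderedPartition.length_le_card hB

lemma finite_setOf_isOSP : {B : List (Finset (Fin n)) | IsOSP B}.Finite := by
  simpa only [isOSP_iff_isOrderedPartition_univ] using finite_setOf_isOrderedPartition univ

lemma IsPF.le {x : ℕ → ℕ} {f : Fin n → ℕ} (hf : IsPF x f) (i : Fin n) : f i ≤ x n := by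
  have hcard := hf.2 n (Fin.pos i) le_rfl
  exact card_filter_eq_iff.mp (le_antisymm (card_filter_le _ _) (by simpa using hcard)) i
    (mem_univ i)

lemma finite_setOf_isPF (x : ℕ → ℕ) (n : ℕ) : {f : Fin n → ℕ | IsPF x f}.Finite :=
  (Set.Finite.pi fun _ => Set.finite_Iic (x n)).subset fun _ hf i _ => hf.le i

lemma finite_setOf_pos_le_pB (x : ℕ → ℕ) (B : List (Finset (Fin n))) :
    {q : Fin n → ℕ | ∀ i, 1 ≤ q i ∧ q i ≤ pB x B i}.Finite :=
  (Set.Finite.pi fun i => Set.finite_Iic (pB x B i)).subset fun _ hq i _ => (hq i).2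

def ParksOn (x : ℕ → ℕ) (f : Fin n → ℕ) (U : Finset (Fin n)) : Prop :=
  ∀ j ∈ Icc 1 #U, j ≤ #{i ∈ U | f i ≤ x j}

instance (x : ℕ → ℕ) (f : Fin n → ℕ) (U : Finset (Fin n)) : Decidable (ParksOn x f U) :=
  inferInstanceAs (Decidable (∀ j ∈ Icc 1 #U, _))

lemma isPF_iff_parksOn_univ {x : ℕ → ℕ} {f : Fin n → ℕ} :
    IsPF x f ↔ (∀ i, 1 ≤ f i) ∧ ParksOn x f univ := by
  simp [IsPF, ParksOn]

lemma ParksOn.nonempty_filter {x : ℕ → ℕ} {f : Fin n → ℕ} {U : Finset (Fin n)}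
    (h : ParksOn x f U) (hU : U.Nonempty) : {i ∈ U | f i ≤ x 1}.Nonempty :=
  card_pos.mp (h 1 (mem_Icc.mpr ⟨le_rfl, hU.card_pos⟩))

lemma parksOn_shift_iff {x : ℕ → ℕ} {f : Fin n → ℕ} (hx : MonotoneOn x (Set.Ici 1))
    {U b : Finset (Fin n)} (hb : b ⊆ {i ∈ U | f i ≤ x 1}) :
    ParksOn (fun k => x (k + #b)) f (U \ b) ↔ ParksOn x f U := by
  have hbU : b ⊆ U := hb.trans (filter_subset _ _)
  have hb_le : ∀ j, 1 ≤ j → b ⊆ {i ∈ U | f i ≤ x j} := fun j hj i hi => by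
    obtain ⟨hiU, hi1⟩ := mem_filter.mp (hb hi)
    exact mem_filter.mpr ⟨hiU, hi1.trans (hx (Set.mem_Ici.mpr le_rfl) hj hj)⟩
  have hcard : ∀ j, 1 ≤ j → #{i ∈ U \ b | f i ≤ x j} + #b = #{i ∈ U | f i ≤ x j} := by
    intro j hj
    rw [← card_sdiff_add_card_eq_card (hb_le j hj)]
    congr 2
    ext i
    simp [and_right_comm]
  have hUb := card_sdiff_add_card_eq_card hbU
  simp only [ParksOn, mem_Icc]
  constructor
  · rintro h j ⟨hj, hjU⟩
    by_cases hjb : j ≤ #b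
    · exact hjb.trans (card_le_card (hb_le j hj))
    · have := h (j - #b) ⟨by omega, by omega⟩
      simp only [Nat.sub_add_cancel (le_of_not_ge hjb)] at this
      have := hcard j hj
      omega
  · rintro h j ⟨hj, hjU⟩
    have := h (j + #b) ⟨by omega, by omega⟩
    have := hcard (j + #b) (by omega)
    omega

def fittingPartitions (x : ℕ → ℕ) (f : Fin n → ℕ) (U : Finset (Fin n)) :
    Set (List (Finset (Fin n))) :=
  {B | IsOrderedPartition U B ∧ ∀ i ∈ U, f i ≤ pB x B i}

lemma fittingPartitions_empty (x : ℕ → ℕ) (f : Fin n → ℕ) : fittingPartitions x f ∅ = {[]} := by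
  ext (_ | ⟨b, B⟩)
  · simp [fittingPartitions, IsOrderedPartition]
  · simp only [Set.mem_singleton_iff, reduceCtorEq, iff_false]
    rintro ⟨⟨hb, hb0, -⟩, -⟩
    exact hb.ne_empty (subset_empty.mp hb0)

lemma cons_mem_fittingPartitions {x : ℕ → ℕ} {f : Fin n → ℕ} {U b : Finset (Fin n)}
    {B : List (Finset (Fin n))} :
    b :: B ∈ fittingPartitions x f U ↔
      (b.Nonempty ∧ b ⊆ {i ∈ U | f i ≤ x 1}) ∧
        B ∈ fittingPartitions (fun k => x (k + #b)) f (U \ b) := by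
  constructor
  · rintro ⟨⟨hb, hbU, hB⟩, hfit⟩
    refine ⟨⟨hb, fun i hi => mem_filter.mpr ⟨hbU hi, ?_⟩⟩, hB, fun i hi => ?_⟩
    · simpa [pB_cons_of_mem x B hi] using hfit i (hbU hi)
    · obtain ⟨hiU, hib⟩ := mem_sdiff.mp hi
      simpa [pB_cons_of_notMem x B hib] using hfit i hiU
  · rintro ⟨⟨hb, hbf⟩, hB, hfit⟩
    have hbU := hbf.trans (filter_subset _ _)
    refine ⟨⟨hb, hbU, hB⟩, fun i hiU => ?_⟩
    by_cases hib : i ∈ b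
    · rw [pB_cons_of_mem x B hib]
      exact (mem_filter.mp (hbf hib)).2
    · rw [pB_cons_of_notMem x B hib]
      exact hfit i (mem_sdiff.mpr ⟨hiU, hib⟩)

lemma finite_fittingPartitions (x : ℕ → ℕ) (f : Fin n → ℕ) (U : Finset (Fin n)) :
    (fittingPartitions x f U).Finite :=
  (finite_setOf_isOrderedPartition U).subset fun _ hB => hB.1

lemma fittingPartitions_eq_biUnion {x : ℕ → ℕ} {f : Fin n → ℕ} {U : Finset (Fin n)}
    (hU : U.Nonempty) :
    fittingPartitions x f U =
      ⋃ b ∈ ({c ∈ {i ∈ U | f i ≤ x 1}.powerset | c.Nonempty} : Finset (Finset (Fin n))),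
        List.cons b '' fittingPartitions (fun k => x (k + #b)) f (U \ b) := by
  ext (_ | ⟨b, B⟩)
  · simp [fittingPartitions, IsOrderedPartition, hU.ne_empty]
  · simp [cons_mem_fittingPartitions, and_comm]

theorem finsum_fittingPartitions_neg_one_pow {x : ℕ → ℕ} (hx : MonotoneOn x (Set.Ici 1))
    (f : Fin n → ℕ) (U : Finset (Fin n)) :
    ∑ᶠ B ∈ fittingPartitions x f U, (-1 : ℤ) ^ (#U + B.length) =
      if ParksOn x f U then 1 else 0 := by
  induction U using Finset.strongInduction generalizing x with
  | H U ih =>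
  rcases U.eq_empty_or_nonempty with rfl | hU
  · simp [fittingPartitions_empty, ParksOn]
  set 𝒟 : Finset (Finset (Fin n)) := {c ∈ {i ∈ U | f i ≤ x 1}.powerset | c.Nonempty}
  have hterm : ∀ b ∈ 𝒟,
      ∑ᶠ B ∈ List.cons b '' fittingPartitions (fun k => x (k + #b)) f (U \ b),
        (-1 : ℤ) ^ (#U + B.length) = -(-1) ^ #b * if ParksOn x f U then 1 else 0 := by
    intro b hb
    obtain ⟨hbf, hb⟩ := mem_filter.mp hb
    have hbf := mem_powerset.mp hbf
    have hbU : b ⊆ U := hbf.trans (filter_subset _ _)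
    have hxb : MonotoneOn (fun k => x (k + #b)) (Set.Ici 1) := fun k hk l hl hkl =>
      hx (Set.mem_Ici.mpr (le_add_right hk)) (Set.mem_Ici.mpr (le_add_right hl)) (by omega)
    have hrest := ih (U \ b) (sdiff_ssubset hbU hb) hxb
    simp only [parksOn_shift_iff hx hbf] at hrest
    rw [finsum_mem_image List.cons_injective.injOn, ← hrest, mul_finsum_mem]
    refine finsum_mem_congr rfl fun B _ => ?_
    rw [← card_sdiff_add_card_eq_card hbU, List.length_cons]
    ring
  have hdisj : (𝒟 : Set (Finset (Fin n))).PairwiseDisjoint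
      fun b => List.cons b '' fittingPartitions (fun k => x (k + #b)) f (U \ b) := by
    intro b₁ _ b₂ _ hne
    refine Set.disjoint_left.mpr ?_
    rintro _ ⟨B₁, -, rfl⟩ ⟨B₂, -, h⟩
    exact hne (List.cons.inj h).1.symm
  rw [fittingPartitions_eq_biUnion hU, ← set_biUnion_coe, finsum_mem_biUnion hdisj 𝒟.finite_toSet
    fun b _ => (finite_fittingPartitions _ f _).image _, finsum_mem_coe_finset,
    sum_congr rfl hterm, ← sum_mul, sum_neg_distrib]
  split_ifs with hP
  · rw [sum_powerset_filter_nonempty_neg_one_pow (hP.nonempty_filter hU)]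
    norm_num
  · simp

theorem finsum_isOSP_fitting_neg_one_pow {x : ℕ → ℕ} (hx : MonotoneOn x (Set.Ici 1))
    (f : Fin n → ℕ) :
    ∑ᶠ B ∈ {B : List (Finset (Fin n)) | IsOSP B ∧ ∀ i, f i ≤ pB x B i},
      (-1 : ℤ) ^ (n - B.length) = if ParksOn x f univ then 1 else 0 := by
  have hset : {B : List (Finset (Fin n)) | IsOSP B ∧ ∀ i, f i ≤ pB x B i} =
      fittingPartitions x f univ := by
    simp [fittingPartitions, isOSP_iff_isOrderedPartition_univ]
  rw [hset, ← finsum_fittingPartitions_neg_one_pow hx]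
  refine finsum_mem_congr rfl fun B hB => ?_
  rw [card_univ, Fintype.card_fin, neg_one_pow_sub_of_le (by simpa using hB.1.length_le_card)]

end

theorem pf_polytope_inclusion_exclusion_general (x : ℕ → ℕ)
    (hx : ∀ m, 1 ≤ m → x m ≤ x (m + 1)) (n : ℕ) :
    ∑ᶠ f ∈ {f : Fin n → ℕ | IsPF x f}, Finsupp.single f (1 : ℤ) =
      ∑ᶠ B ∈ {B : List (Finset (Fin n)) | IsOSP B},
        ((-1 : ℤ) ^ (n - B.length)) •
          ∑ᶠ q ∈ {q : Fin n → ℕ | ∀ i, 1 ≤ q i ∧ q i ≤ pB x B i},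
            Finsupp.single q (1 : ℤ) := by
  ext g
  rw [Finsupp.finsum_mem_single_apply (finite_setOf_isPF x n),
    Finsupp.finsum_mem_apply finite_setOf_isOSP]
  simp only [Finsupp.smul_apply, Finsupp.finsum_mem_single_apply (finite_setOf_pos_le_pB x _)]
  by_cases hg : ∀ i, 1 ≤ g i
  · have hterm (B : List (Finset (Fin n))) :
        (-1 : ℤ) ^ (n - B.length) •
            {q : Fin n → ℕ | ∀ i, 1 ≤ q i ∧ q i ≤ pB x B i}.indicator (fun _ => 1) g =
          {B | ∀ i, g i ≤ pB x B i}.indicator (fun B => (-1) ^ (n - B.length)) B := by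
      by_cases hfit : ∀ i, g i ≤ pB x B i <;> simp [hfit, hg]
    rw [finsum_mem_congr rfl fun B _ => hterm B, finsum_mem_inter_indicator, ← Set.ofPred_and,
      finsum_isOSP_fitting_neg_one_pow (monotoneOn_nat_Ici_of_le_succ hx)]
    simp [Set.indicator_apply, isPF_iff_parksOn_univ, hg]
  · have hPF : g ∉ {f : Fin n → ℕ | IsPF x f} := fun h => hg h.1
    have hbox (B : List (Finset (Fin n))) : g ∉ {q | ∀ i, 1 ≤ q i ∧ q i ≤ pB x B i} :=
      fun h => hg fun i => (h i).1
    simp [hPF, hbox]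

theorem pf_polytope_inclusion_exclusion (x : ℕ → ℕ)
    (hx : ∀ m, 1 ≤ m → x m ≤ x (m + 1)) (n : ℕ) (hn : 1 ≤ n) :
    ∑ᶠ f ∈ {f : Fin n → ℕ | IsPF x f}, Finsupp.single f (1 : ℤ) =
      ∑ᶠ B ∈ {B : List (Finset (Fin n)) | IsOSP B},
        ((-1 : ℤ) ^ (n - B.length)) •
          ∑ᶠ q ∈ {q : Fin n → ℕ | ∀ i, 1 ≤ q i ∧ q i ≤ pB x B i},
            Finsupp.single q (1 : ℤ) :=
  pf_polytope_inclusion_exclusion_general x hx n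
end

section
/- Let x : ℕ → ℕ (indexed from 1) be strictly increasing, n ≥ 1, f a non-decreasing x-parking function of length n, and I a set of pairs. Suppose the set P = {p : p is a primitive x-parking function of length n with p(i) ≥ f(i) for all i and inv(p) = I} is nonempty, and let D = max{d(p) : p ∈ P}. Then Σ_{p ∈ P} t^{d(p)} = (1 + t)^{D} in ℤ[t]; equivalently, for every 0 ≤ j ≤ D, the number of p ∈ P with d(p) = D − j equals the binomial coefficient C(D, j). -/
/-- A primitive `x`-parking function: every value `v` in the image satisfies
`v = x(1 + #{i : p i < v})`. -/
def IsPrimitive (x : ℕ → ℕ) {n : ℕ} (p : Fin n → ℕ) : Prop :=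
  IsPF x p ∧ ∀ v ∈ Set.range p,
    v = x (1 + (Finset.univ.filter (fun i => p i < v)).card)

/-- The dimension `d(p) = n - #(image of p)` of a parking function. -/
def pdim {n : ℕ} (p : Fin n → ℕ) : ℕ := n - (Finset.univ.image p).card

/-- The inversion set `inv(p) = {(i,j) : i < j and p(i) ≥ p(j)}`. -/
def inversions {n : ℕ} (p : Fin n → ℕ) : Set (Fin n × Fin n) :=
  {q | q.1 < q.2 ∧ p q.2 ≤ p q.1}

/-!
Fix `p₀ ∈ P` and let `σ` list the indices by increasing value of `p₀`, equal values by
decreasing index. A function has inversion set `inv p₀` exactly when `σ` sorts it in the same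
way, and a primitive function is determined by its order pattern, since
`p i = x (1 + #{j | p j < p i})`; once sorted by `σ`, it is thus determined by the set of
neighbouring positions of `σ` where it takes equal values, and these are necessarily descents
of `σ`. Conversely, gluing `σ` into blocks along any set `S` of its descents and giving the block
that starts at position `s` the value `x (1 + s)` yields a primitive function of dimension `#S`
with inversion set `inv p₀`. It still lies above the non-decreasing `f`: along a block the
indices decrease, while `f (σ k) ≤ p₀ (σ k) ≤ x (1 + k)`. So `P` is in bijection with the
subsets of the descent set of `σ`, `D` is the number of descents, and
`∑ t ^ d(p) = (1 + t) ^ D`.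
-/

namespace XParking

/-- Positions `a ∈ S` are glued to `a + 1`; `blockStart S k` is the first position of the block
containing `k`. -/
def blockStart (S : Finset ℕ) : ℕ → ℕ
  | 0 => 0
  | k + 1 => if k ∈ S then blockStart S k else k + 1

section blockStart

variable {S : Finset ℕ} {k l a : ℕ}

@[simp]
theorem blockStart_succ_of_mem (h : a ∈ S) : blockStart S (a + 1) = blockStart S a := if_pos h

@[simp]
theorem blockStart_succ_of_notMem (h : a ∉ S) : blockStart S (a + 1) = a + 1 := if_neg h

theorem blockStart_le (S : Finset ℕ) (k : ℕ) : blockStart S k ≤ k := by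
  induction k with
  | zero => rfl
  | succ k ih =>
    by_cases h : k ∈ S
    · rw [blockStart_succ_of_mem h]; omega
    · rw [blockStart_succ_of_notMem h]

theorem blockStart_le_iff (h : l ≤ k) : blockStart S k ≤ l ↔ Finset.Ico l k ⊆ S := by
  induction k, h using Nat.le_induction with
  | base => simp [blockStart_le]
  | succ k hlk ih =>
    rw [← Finset.insert_Ico_right_eq_Ico_add_one hlk, Finset.insert_subset_iff]
    by_cases hk : k ∈ S
    · simp [hk, ih]
    · simp [hk, hlk]

theorem blockStart_mono (S : Finset ℕ) : Monotone (blockStart S) := by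
  refine monotone_nat_of_le_succ fun k => ?_
  by_cases h : k ∈ S
  · rw [blockStart_succ_of_mem h]
  · rw [blockStart_succ_of_notMem h]; exact (blockStart_le S k).trans k.le_succ

theorem Ico_blockStart_subset (S : Finset ℕ) (k : ℕ) : Finset.Ico (blockStart S k) k ⊆ S :=
  (blockStart_le_iff (blockStart_le S k)).1 le_rfl

@[simp]
theorem blockStart_blockStart (S : Finset ℕ) (k : ℕ) :
    blockStart S (blockStart S k) = blockStart S k := by
  induction k with
  | zero => rfl
  | succ k ih =>
    by_cases h : k ∈ S
    · rw [blockStart_succ_of_mem h, ih]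
    · rw [blockStart_succ_of_notMem h, blockStart_succ_of_notMem h]

theorem blockStart_lt_blockStart_iff : blockStart S k < blockStart S l ↔ k < blockStart S l := by
  constructor
  · intro h
    by_contra! hle
    exact h.not_ge (by simpa using blockStart_mono S hle)
  · exact fun h => (blockStart_le S k).trans_lt h

theorem mem_iff_blockStart_succ_le : a ∈ S ↔ blockStart S (a + 1) ≤ a := by
  rw [blockStart_le_iff a.le_succ, Nat.Ico_succ_singleton, Finset.singleton_subset_iff]

theorem image_blockStart_range (S : Finset ℕ) (n : ℕ) :
    (Finset.range n).image (blockStart S) = Finset.range n \ S.image (· + 1) := by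
  ext s
  simp only [Finset.mem_image, Finset.mem_range, Finset.mem_sdiff, not_exists, not_and]
  constructor
  · rintro ⟨k, hk, rfl⟩
    refine ⟨(blockStart_le S k).trans_lt hk, fun a ha hak => ?_⟩
    have := mem_iff_blockStart_succ_le.1 ha
    rw [hak, blockStart_blockStart] at this
    omega
  · rintro ⟨hs, hcut⟩
    refine ⟨s, hs, ?_⟩
    cases s with
    | zero => rfl
    | succ a => exact blockStart_succ_of_notMem fun ha => hcut a ha rfl

theorem card_image_blockStart_range {n : ℕ} (hS : S ⊆ Finset.range (n - 1)) :
    ((Finset.range n).image (blockStart S)).card = n - S.card := by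
  have hsub : S.image (· + 1) ⊆ Finset.range n := by
    intro b hb
    obtain ⟨a, ha, rfl⟩ := Finset.mem_image.1 hb
    have := Finset.mem_range.1 (hS ha)
    exact Finset.mem_range.2 (by omega)
  rw [image_blockStart_range, Finset.card_sdiff_of_subset hsub, Finset.card_range,
    Finset.card_image_of_injective _ (add_left_injective 1)]

end blockStart

def plateaus (n : ℕ) (g : ℕ → ℕ) : Finset ℕ :=
  (Finset.range (n - 1)).filter fun a => g (a + 1) = g a

theorem eq_iff_Ico_subset_plateaus {n k l : ℕ} {g : ℕ → ℕ} (hg : MonotoneOn g (Set.Iio n))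
    (hkl : k ≤ l) (hl : l < n) : g k = g l ↔ Finset.Ico k l ⊆ plateaus n g := by
  have hlt {a : ℕ} (ha : a ≤ l) : a ∈ Set.Iio n := Set.mem_Iio.2 (by omega)
  constructor
  · intro hgkl m hm
    obtain ⟨hkm, hml⟩ := Finset.mem_Ico.1 hm
    have h1 : g k ≤ g m := hg (hlt hkl) (hlt hml.le) hkm
    have h2 : g m ≤ g (m + 1) := hg (hlt hml.le) (hlt hml) m.le_succ
    have h3 : g (m + 1) ≤ g l := hg (hlt hml) (hlt le_rfl) hml
    simp only [plateaus, Finset.mem_filter, Finset.mem_range]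
    omega
  · intro hsub
    have hanti : AntitoneOn g (Set.Icc k l) :=
      antitoneOn_of_add_one_le Set.ordConnected_Icc fun a _ ha ha1 =>
        ((Finset.mem_filter.1 (hsub (Finset.mem_Ico.2 ⟨ha.1, ha1.2⟩))).2).le
    exact le_antisymm (hg (hlt hkl) (hlt le_rfl) hkl)
      (hanti ⟨le_rfl, hkl⟩ ⟨hkl, le_rfl⟩ hkl)

theorem lt_iff_blockStart_plateaus_lt {n k l : ℕ} {g : ℕ → ℕ}
    (hg : MonotoneOn g (Set.Iio n)) (hk : k < n) (hl : l < n) :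
    g k < g l ↔ blockStart (plateaus n g) k < blockStart (plateaus n g) l := by
  rw [blockStart_lt_blockStart_iff]
  rcases lt_or_ge l k with hlk | hkl
  · exact iff_of_false (hg (by simpa) (by simpa) hlk.le).not_gt
      ((blockStart_le _ l).trans hlk.le).not_gt
  · rw [(hg (by simpa) (by simpa) hkl).lt_iff_ne, Ne, eq_iff_Ico_subset_plateaus hg hkl hl,
      ← blockStart_le_iff hkl, not_le]

variable {n : ℕ}

def listing (σ : Equiv.Perm (Fin n)) (g : Fin n → ℕ) (k : ℕ) : ℕ :=
  if h : k < n then g (σ ⟨k, h⟩) else 0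

theorem listing_of_lt (σ : Equiv.Perm (Fin n)) (g : Fin n → ℕ) {k : ℕ} (h : k < n) :
    listing σ g k = g (σ ⟨k, h⟩) := dif_pos h

@[simp]
theorem listing_symm_apply (σ : Equiv.Perm (Fin n)) (g : Fin n → ℕ) (i : Fin n) :
    listing σ g (σ.symm i) = g i := by
  simp [listing_of_lt σ g (σ.symm i).isLt]

def descents (σ : Equiv.Perm (Fin n)) : Finset ℕ :=
  (Finset.range (n - 1)).filter fun a => listing σ Fin.val (a + 1) < listing σ Fin.val a

theorem descents_subset_range (σ : Equiv.Perm (Fin n)) : descents σ ⊆ Finset.range (n - 1) :=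
  Finset.filter_subset _ _

theorem strictAntiOn_listing_val {σ : Equiv.Perm (Fin n)} {S : Finset ℕ} {k l : ℕ}
    (hS : S ⊆ descents σ) (hkl : Finset.Ico k l ⊆ S) :
    StrictAntiOn (listing σ Fin.val) (Set.Icc k l) :=
  strictAntiOn_of_add_one_lt Set.ordConnected_Icc fun _ _ ha ha1 =>
    (Finset.mem_filter.1 (hS (hkl (Finset.mem_Ico.2 ⟨ha.1, ha1.2⟩)))).2

def sortKey (p : Fin n → ℕ) (i : Fin n) : ℕ ×ₗ (Fin n)ᵒᵈ :=
  toLex (p i, OrderDual.toDual i)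

theorem sortKey_lt_sortKey {p : Fin n → ℕ} {i j : Fin n} :
    sortKey p i < sortKey p j ↔ p i < p j ∨ p i = p j ∧ j < i := by
  simp [sortKey, Prod.Lex.toLex_lt_toLex]

theorem exists_strictMono_sortKey_comp (p : Fin n → ℕ) :
    ∃ σ : Equiv.Perm (Fin n), StrictMono (sortKey p ∘ σ) := by
  have hinj : Function.Injective (sortKey p) := fun i j h =>
    congrArg (fun q : ℕ ×ₗ (Fin n)ᵒᵈ => OrderDual.ofDual (ofLex q).2) h
  exact ⟨Tuple.sort (sortKey p),
    (Tuple.monotone_sort _).strictMono_of_injective (hinj.comp (Equiv.injective _))⟩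

theorem strictMono_sortKey_comp_iff {σ : Equiv.Perm (Fin n)} {p : Fin n → ℕ} :
    StrictMono (sortKey p ∘ σ) ↔
      inversions p = {q | q.1 < q.2 ∧ σ.symm q.2 < σ.symm q.1} := by
  have hre : StrictMono (sortKey p ∘ σ) ↔
      ∀ i j, σ.symm i < σ.symm j → sortKey p i < sortKey p j :=
    ⟨fun h i j hij => by simpa using h hij,
     fun h k l hkl => h (σ k) (σ l) (by simpa using hkl)⟩
  rw [hre]
  constructor
  · intro h
    ext ⟨i, j⟩
    simp only [inversions, Set.mem_ofPred_eq, and_congr_right_iff]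
    intro hij
    rcases lt_trichotomy (σ.symm i) (σ.symm j) with hσ | hσ | hσ
    · have := sortKey_lt_sortKey.1 (h i j hσ)
      exact iff_of_false (by grind) hσ.not_gt
    · exact absurd (σ.symm.injective hσ) hij.ne
    · have := sortKey_lt_sortKey.1 (h j i hσ)
      exact iff_of_true (by grind) hσ
  · intro h i j hσ
    rw [sortKey_lt_sortKey]
    rcases lt_trichotomy i j with hij | rfl | hij
    · have : (i, j) ∉ inversions p := by simp [h, hσ.not_gt]
      simp only [inversions, Set.mem_ofPred_eq, not_and, not_le] at this
      exact Or.inl (this hij)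
    · exact absurd hσ (lt_irrefl _)
    · have : (j, i) ∈ inversions p := by simp [h, hij, hσ]
      exact (this.2.lt_or_eq).imp id fun he => ⟨he, hij⟩

theorem inversions_eq_iff {σ : Equiv.Perm (Fin n)} {p q : Fin n → ℕ}
    (hp : StrictMono (sortKey p ∘ σ)) :
    inversions q = inversions p ↔ StrictMono (sortKey q ∘ σ) := by
  rw [strictMono_sortKey_comp_iff, strictMono_sortKey_comp_iff.1 hp]

theorem monotoneOn_listing {σ : Equiv.Perm (Fin n)} {p : Fin n → ℕ}
    (hp : StrictMono (sortKey p ∘ σ)) : MonotoneOn (listing σ p) (Set.Iio n) := by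
  intro k hk l hl hkl
  rw [listing_of_lt σ p hk, listing_of_lt σ p hl]
  rcases (show (⟨k, hk⟩ : Fin n) ≤ ⟨l, hl⟩ from hkl).lt_or_eq with hlt | heq
  · exact (sortKey_lt_sortKey.1 (hp hlt)).elim le_of_lt fun h => h.1.le
  · rw [heq]

theorem plateaus_subset_descents {σ : Equiv.Perm (Fin n)} {p : Fin n → ℕ}
    (hp : StrictMono (sortKey p ∘ σ)) : plateaus n (listing σ p) ⊆ descents σ := by
  intro a ha
  obtain ⟨ha, heq⟩ := Finset.mem_filter.1 ha
  have ha' : a + 1 < n := by have := Finset.mem_range.1 ha; omega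
  refine Finset.mem_filter.2 ⟨ha, ?_⟩
  rw [listing_of_lt σ p ha', listing_of_lt σ p (by omega)] at heq
  rw [listing_of_lt σ _ ha', listing_of_lt σ _ (by omega)]
  have := sortKey_lt_sortKey.1
    (hp (show (⟨a, by omega⟩ : Fin n) < ⟨a + 1, ha'⟩ from Fin.mk_lt_mk.2 a.lt_succ_self))
  exact (this.resolve_left (by omega)).2

theorem card_filter_symm_lt (σ : Equiv.Perm (Fin n)) (s : ℕ) :
    (Finset.univ.filter fun i => (σ.symm i : ℕ) < s).card = min n s := by
  have : (Finset.univ.filter fun i => (σ.symm i : ℕ) < s) =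
      (Finset.univ.filter fun i : Fin n => (i : ℕ) < s).map σ.toEmbedding := by
    ext i
    simp
  rw [this, Finset.card_map, Fin.card_filter_val_lt]

def blockFun (x : ℕ → ℕ) (σ : Equiv.Perm (Fin n)) (S : Finset ℕ) (i : Fin n) : ℕ :=
  x (1 + blockStart S (σ.symm i))

section blockFun

variable {x : ℕ → ℕ} {σ : Equiv.Perm (Fin n)} {S : Finset ℕ}

theorem blockFun_lt_blockFun_iff (hx : StrictMonoOn x (Set.Ici 1)) {i j : Fin n} :
    blockFun x σ S i < blockFun x σ S j ↔
      blockStart S (σ.symm i) < blockStart S (σ.symm j) := by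
  rw [blockFun, blockFun, hx.lt_iff_lt (by simp) (by simp), add_lt_add_iff_left]

theorem blockFun_le (hx : StrictMonoOn x (Set.Ici 1)) (i : Fin n) :
    blockFun x σ S i ≤ x (1 + σ.symm i) :=
  hx.monotoneOn (by simp) (by simp) (by simpa using blockStart_le S _)

theorem blockFun_eq_x_one_add_card (hx : StrictMonoOn x (Set.Ici 1)) (i : Fin n) :
    blockFun x σ S i =
      x (1 + (Finset.univ.filter fun j => blockFun x σ S j < blockFun x σ S i).card) := by
  simp_rw [blockFun_lt_blockFun_iff hx, blockStart_lt_blockStart_iff, card_filter_symm_lt,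
    min_eq_right ((blockStart_le S _).trans (σ.symm i).isLt.le)]
  rfl

theorem isPrimitive_blockFun (hx : StrictMonoOn x (Set.Ici 1))
    (hpos : ∀ i, 1 ≤ blockFun x σ S i) :
    IsPrimitive x (blockFun x σ S) := by
  refine ⟨⟨hpos, fun k hk hkn => ?_⟩, ?_⟩
  · calc k = (Finset.univ.filter fun i => (σ.symm i : ℕ) < k).card := by
          rw [card_filter_symm_lt, min_eq_right hkn]
      _ ≤ _ := Finset.card_le_card fun i hi => by
          simp only [Finset.mem_filter, Finset.mem_univ, true_and] at hi ⊢
          exact (blockFun_le hx i).trans (hx.monotoneOn (by simp) (by simpa) (by omega))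
  · rintro v ⟨i, rfl⟩
    exact blockFun_eq_x_one_add_card hx i

theorem strictMono_sortKey_blockFun (hx : StrictMonoOn x (Set.Ici 1)) (hS : S ⊆ descents σ) :
    StrictMono (sortKey (blockFun x σ S) ∘ σ) := by
  intro k l hkl
  simp only [Function.comp_apply, sortKey_lt_sortKey, blockFun_lt_blockFun_iff hx,
    Equiv.symm_apply_apply]
  rcases (blockStart_mono S hkl.le).lt_or_eq with hlt | heq
  · exact Or.inl hlt
  · refine Or.inr ⟨by simp [blockFun, heq], ?_⟩
    have hsub : Finset.Ico (k : ℕ) l ⊆ S :=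
      (blockStart_le_iff hkl.le).1 (heq ▸ blockStart_le S k)
    have := strictAntiOn_listing_val hS hsub ⟨le_rfl, hkl.le⟩ ⟨hkl.le, le_rfl⟩ hkl
    simpa [listing_of_lt σ _ k.isLt, listing_of_lt σ _ l.isLt] using this

theorem le_blockFun {f : Fin n → ℕ} (hS : S ⊆ descents σ) (hf : Monotone f)
    (hfσ : ∀ k : Fin n, f (σ k) ≤ x (1 + k)) (i : Fin n) : f i ≤ blockFun x σ S i := by
  have hk := blockStart_le S (σ.symm i)
  have hs : blockStart S (σ.symm i) < n := hk.trans_lt (σ.symm i).isLt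
  have hanti := (strictAntiOn_listing_val hS (Ico_blockStart_subset S _)).antitoneOn
    ⟨le_rfl, hk⟩ ⟨hk, le_rfl⟩ hk
  rw [listing_of_lt σ _ hs, listing_symm_apply, ← Fin.le_def] at hanti
  exact (hf hanti).trans (hfσ _)

theorem pdim_blockFun (hx : StrictMonoOn x (Set.Ici 1)) (hS : S ⊆ Finset.range (n - 1)) :
    pdim (blockFun x σ S) = S.card := by
  have himage : Finset.univ.image (blockFun x σ S) =
      ((Finset.range n).image (blockStart S)).image fun s => x (1 + s) := by
    ext v
    simp only [Finset.mem_image, Finset.mem_univ, true_and, Finset.mem_range]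
    constructor
    · rintro ⟨i, rfl⟩
      exact ⟨_, ⟨_, (σ.symm i).isLt, rfl⟩, rfl⟩
    · rintro ⟨_, ⟨k, hk, rfl⟩, rfl⟩
      exact ⟨σ ⟨k, hk⟩, by simp [blockFun]⟩
  have hinj : Set.InjOn (fun s => x (1 + s)) ↑((Finset.range n).image (blockStart S)) :=
    fun a _ b _ hab => by simpa using hx.injOn (by simp) (by simp) hab
  rw [pdim, himage, Finset.card_image_of_injOn hinj, card_image_blockStart_range hS]
  have := Finset.card_le_card hS
  rw [Finset.card_range] at this
  omega

theorem blockFun_injOn (hx : StrictMonoOn x (Set.Ici 1)) :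
    Set.InjOn (blockFun x σ) {S | S ⊆ Finset.range (n - 1)} := by
  intro S hS S' hS' h
  have hst : ∀ k < n, blockStart S k = blockStart S' k := fun k hk => by
    have := congrFun h (σ ⟨k, hk⟩)
    simpa [blockFun] using hx.injOn (by simp) (by simp) this
  ext a
  by_cases ha : a < n - 1
  · rw [mem_iff_blockStart_succ_le, mem_iff_blockStart_succ_le, hst _ (by omega)]
  · exact iff_of_false (fun h' => ha (by simpa using hS h'))
      (fun h' => ha (by simpa using hS' h'))

theorem blockFun_plateaus (hx : StrictMonoOn x (Set.Ici 1)) {p : Fin n → ℕ}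
    (hp : IsPrimitive x p) (hσ : StrictMono (sortKey p ∘ σ)) :
    blockFun x σ (plateaus n (listing σ p)) = p := by
  funext i
  rw [blockFun_eq_x_one_add_card hx, hp.2 (p i) ⟨i, rfl⟩]
  congr 3
  ext j
  simp only [Finset.mem_filter, Finset.mem_univ, true_and]
  rw [blockFun_lt_blockFun_iff hx, ← lt_iff_blockStart_plateaus_lt (monotoneOn_listing hσ)
    (σ.symm j).isLt (σ.symm i).isLt, listing_symm_apply, listing_symm_apply]

end blockFun

theorem setOf_eq_image_blockFun {x : ℕ → ℕ} (hx : StrictMonoOn x (Set.Ici 1))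
    {f p₀ : Fin n → ℕ} (hf1 : ∀ i, 1 ≤ f i) (hf : Monotone f) (hp₀ : IsPrimitive x p₀)
    (hfp₀ : ∀ i, f i ≤ p₀ i) {σ : Equiv.Perm (Fin n)}
    (hσ : StrictMono (sortKey p₀ ∘ σ)) :
    {p | IsPrimitive x p ∧ (∀ i, f i ≤ p i) ∧ inversions p = inversions p₀} =
      blockFun x σ '' ↑(descents σ).powerset := by
  have hfσ (k : Fin n) : f (σ k) ≤ x (1 + k) := by
    rw [← blockFun_plateaus hx hp₀ hσ] at hfp₀
    simpa using (hfp₀ (σ k)).trans (blockFun_le hx (σ k))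
  ext p
  simp only [Set.mem_ofPred_eq, Set.mem_image, Finset.coe_powerset, Set.mem_preimage,
    Set.mem_powerset_iff, Finset.coe_subset]
  constructor
  · rintro ⟨hp, -, hinv⟩
    have hσp := (inversions_eq_iff hσ).1 hinv
    exact ⟨_, plateaus_subset_descents hσp, blockFun_plateaus hx hp hσp⟩
  · rintro ⟨S, hS, rfl⟩
    have hfS := le_blockFun hS hf hfσ
    exact ⟨isPrimitive_blockFun hx fun i => (hf1 i).trans (hfS i), hfS,
      (inversions_eq_iff hσ).2 (strictMono_sortKey_blockFun hx hS)⟩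

section powerset

variable {α ι : Type*} {A : Finset ι} {φ : Finset ι → α} {d : α → ℕ}

theorem eq_card_of_forall_le_of_exists_eq {D : ℕ}
    (hd : ∀ S ⊆ A, d (φ S) = S.card) (hD : ∃ p ∈ φ '' ↑A.powerset, d p = D)
    (hDmax : ∀ p ∈ φ '' ↑A.powerset, d p ≤ D) : D = A.card := by
  obtain ⟨_, ⟨S, hS, rfl⟩, rfl⟩ := hD
  rw [Finset.mem_coe, Finset.mem_powerset] at hS
  have := hDmax (φ A) ⟨A, by simp, rfl⟩
  rw [hd A subset_rfl, hd S hS] at this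
  rw [hd S hS]
  exact le_antisymm (Finset.card_le_card hS) this

theorem finsum_mem_image_powerset_X_pow (hφ : Set.InjOn φ ↑A.powerset)
    (hd : ∀ S ⊆ A, d (φ S) = S.card) :
    ∑ᶠ p ∈ φ '' ↑A.powerset, (Polynomial.X : Polynomial ℤ) ^ d p =
      (1 + Polynomial.X) ^ A.card := by
  rw [finsum_mem_image hφ, finsum_mem_coe_finset, add_comm,
    ← Finset.sum_pow_mul_eq_add_pow Polynomial.X 1 A]
  refine Finset.sum_congr rfl fun S hS => ?_
  rw [hd S (Finset.mem_powerset.1 hS), one_pow, mul_one]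

theorem card_image_powerset_eq_choose [DecidableEq ι] (hφ : Set.InjOn φ ↑A.powerset)
    (hd : ∀ S ⊆ A, d (φ S) = S.card) {j : ℕ} (hj : j ≤ A.card) :
    Nat.card {p // p ∈ φ '' ↑A.powerset ∧ d p = A.card - j} = A.card.choose j := by
  have hset : {p | p ∈ φ '' ↑A.powerset ∧ d p = A.card - j} =
      φ '' ↑(A.powersetCard (A.card - j)) := by
    ext p
    simp only [Set.mem_ofPred_eq, Set.mem_image, Finset.mem_coe, Finset.mem_powerset,
      Finset.mem_powersetCard]
    constructor
    · rintro ⟨⟨S, hS, rfl⟩, hdS⟩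
      exact ⟨S, ⟨hS, hd S hS ▸ hdS⟩, rfl⟩
    · rintro ⟨S, ⟨hS, hcard⟩, rfl⟩
      exact ⟨⟨S, hS, rfl⟩, hcard ▸ hd S hS⟩
  rw [← Set.coe_ofPred, Nat.card_coe_set_eq, hset, (hφ.mono _).ncard_image,
    Set.ncard_coe_finset, Finset.card_powersetCard, Nat.choose_symm hj]
  exact fun S hS => Finset.mem_powerset.2 (Finset.mem_powersetCard.1 hS).1

end powerset

end XParking

open XParking in
theorem primitive_dim_generating_function_general (x : ℕ → ℕ)
    (hx : ∀ m, 1 ≤ m → x m < x (m + 1)) (n : ℕ)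
    (f : Fin n → ℕ) (hfPF : IsPF x f) (hfMono : Monotone f)
    (I : Set (Fin n × Fin n)) (D : ℕ)
    (hD : ∃ p ∈ {p : Fin n → ℕ |
        IsPrimitive x p ∧ (∀ i, f i ≤ p i) ∧ inversions p = I}, pdim p = D)
    (hDmax : ∀ p ∈ {p : Fin n → ℕ |
        IsPrimitive x p ∧ (∀ i, f i ≤ p i) ∧ inversions p = I}, pdim p ≤ D) :
    (∑ᶠ p ∈ {p : Fin n → ℕ |
        IsPrimitive x p ∧ (∀ i, f i ≤ p i) ∧ inversions p = I},
      (Polynomial.X : Polynomial ℤ) ^ pdim p) = (1 + Polynomial.X) ^ D ∧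
    ∀ j ≤ D, Nat.card {p : Fin n → ℕ //
        (IsPrimitive x p ∧ (∀ i, f i ≤ p i) ∧ inversions p = I) ∧
        pdim p = D - j} = D.choose j := by
  obtain ⟨p₀, ⟨hp₀, hfp₀, rfl⟩, -⟩ := id hD
  have hxmono : StrictMonoOn x (Set.Ici 1) :=
    strictMonoOn_of_lt_add_one Set.ordConnected_Ici fun m _ hm _ => hx m hm
  obtain ⟨σ, hσ⟩ := exists_strictMono_sortKey_comp p₀
  have hinj : Set.InjOn (blockFun x σ) ↑(descents σ).powerset :=
    (blockFun_injOn hxmono).mono fun S hS =>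
      (Finset.mem_powerset.1 hS).trans (descents_subset_range σ)
  have hdim (S) (hS : S ⊆ descents σ) : pdim (blockFun x σ S) = S.card :=
    pdim_blockFun hxmono (hS.trans (descents_subset_range σ))
  have hP := setOf_eq_image_blockFun hxmono hfPF.1 hfMono hp₀ hfp₀ hσ
  rw [hP] at hD hDmax
  obtain rfl := eq_card_of_forall_le_of_exists_eq hdim hD hDmax
  refine ⟨hP ▸ finsum_mem_image_powerset_X_pow hinj hdim, fun j hj => ?_⟩
  have := card_image_powerset_eq_choose hinj hdim hj
  rwa [← hP] at this

theorem primitive_dim_generating_function (x : ℕ → ℕ)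
    (hx : ∀ m, 1 ≤ m → x m < x (m + 1)) (n : ℕ) (hn : 1 ≤ n)
    (f : Fin n → ℕ) (hfPF : IsPF x f) (hfMono : Monotone f)
    (I : Set (Fin n × Fin n)) (D : ℕ)
    (hD : ∃ p ∈ {p : Fin n → ℕ |
        IsPrimitive x p ∧ (∀ i, f i ≤ p i) ∧ inversions p = I}, pdim p = D)
    (hDmax : ∀ p ∈ {p : Fin n → ℕ |
        IsPrimitive x p ∧ (∀ i, f i ≤ p i) ∧ inversions p = I}, pdim p ≤ D) :
    (∑ᶠ p ∈ {p : Fin n → ℕ |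
        IsPrimitive x p ∧ (∀ i, f i ≤ p i) ∧ inversions p = I},
      (Polynomial.X : Polynomial ℤ) ^ pdim p) = (1 + Polynomial.X) ^ D ∧
    ∀ j ≤ D, Nat.card {p : Fin n → ℕ //
        (IsPrimitive x p ∧ (∀ i, f i ≤ p i) ∧ inversions p = I) ∧
        pdim p = D - j} = D.choose j :=
  primitive_dim_generating_function_general x hx n f hfPF hfMono I D hD hDmax
end
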